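/- arXiv:0807.3816 — 6 statements merged into one kernel-verified Lean document; each statement's English description precedes it below -/
import Mathlib

section
/- Fix m ≥ 1. For any two elements s and s' of Λ^m with s ≠ s', there exist integers a_1, a_2, …, a_k ∈ {0, 1, 2} (depending on s and s') such that s' = Θ^{a_k} Θ^{a_{k−1}} ⋯ Θ^{a_1}(s). Moreover, the integers a_1, …, a_k can be chosen so that s ∈ Λ_{a_1}^m and Θ^{a_{i−1}} Θ^{a_{i−2}} ⋯ Θ^{a_1}(s) ∈ Λ_{a_i}^m for all i = 2, …, k. -/
open MeasureTheory ProbabilityTheory Filter Finset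
open scoped ENNReal NNReal

noncomputable section

/-- Reflection of a discrete path at level `a`:
`Θ^a(s)_n = ∑_{k=1}^n (1_{k ≤ T_a(s)} - 1_{k > T_a(s)}) (s_k - s_{k-1})`,
where `k ≤ T_a(s)` iff `s_j ≠ a` for every `j < k`. -/
def reflect (a : ℤ) (s : ℕ → ℤ) : ℕ → ℤ := fun n =>
  ∑ k ∈ Finset.range n, if ∀ j ≤ k, s j ≠ a then s (k + 1) - s k else s k - s (k + 1)

/-- Iterated reflections: `reflectSeq [a₁, …, a_k] s = Θ^{a_k} Θ^{a_{k-1}} ⋯ Θ^{a₁}(s)`. -/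
def reflectSeq (L : List ℤ) (s : ℕ → ℤ) : ℕ → ℤ :=
  L.foldl (fun t a => reflect a t) s

/-- `s` belongs to `Λ^m`: `s_0 = 0` and `s_k - s_{k-1} ∈ {-1, +1}` for `1 ≤ k ≤ m`.
(Only the coordinates `s_0, …, s_m` are relevant.) -/
def InLambda (m : ℕ) (s : ℕ → ℤ) : Prop :=
  s 0 = 0 ∧ ∀ k < m, s (k + 1) - s k = 1 ∨ s (k + 1) - s k = -1

namespace RCh

def Agree (m : ℕ) (s t : ℕ → ℤ) : Prop := ∀ n ≤ m, s n = t n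

def flipFrom (T : ℕ) (s : ℕ → ℤ) : ℕ → ℤ := fun n => if n ≤ T then s n else 2 * s T - s n

def Good (L : List ℤ) : Prop := ∀ a ∈ L, a = 0 ∨ a = 1 ∨ a = 2

def ValidC (m : ℕ) : (ℕ → ℤ) → List ℤ → Prop
  | _, [] => True
  | s, a :: L => (∃ k < m, s k = a) ∧ ValidC m (reflect a s) L

lemma reflectSeq_nil (s : ℕ → ℤ) : reflectSeq [] s = s := rfl

lemma reflectSeq_cons (a : ℤ) (L : List ℤ) (s : ℕ → ℤ) :
    reflectSeq (a :: L) s = reflectSeq L (reflect a s) := rfl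

lemma reflectSeq_append (L₁ L₂ : List ℤ) (s : ℕ → ℤ) :
    reflectSeq (L₁ ++ L₂) s = reflectSeq L₂ (reflectSeq L₁ s) := by
  simp [reflectSeq, List.foldl_append]

lemma good_append {L₁ L₂ : List ℤ} (h₁ : Good L₁) (h₂ : Good L₂) : Good (L₁ ++ L₂) := by
  intro a ha; rcases List.mem_append.1 ha with h | h
  · exact h₁ a h
  · exact h₂ a h

lemma reflect_congr {m : ℕ} {s t : ℕ → ℤ} (a : ℤ) (h : Agree m s t) :
    Agree m (reflect a s) (reflect a t) := by
  intro n hn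
  unfold reflect
  apply Finset.sum_congr rfl
  intro k hk
  have hk' : k + 1 ≤ m := by
    have := Finset.mem_range.1 hk; omega
  have h1 : s (k+1) = t (k+1) := h _ hk'
  have h2 : s k = t k := h _ (by omega)
  have h3 : (∀ j ≤ k, s j ≠ a) ↔ (∀ j ≤ k, t j ≠ a) := by
    constructor <;> intro hh j hj <;>
      [rw [← h j (by omega)]; rw [h j (by omega)]] <;> exact hh j hj
  by_cases hc : ∀ j ≤ k, s j ≠ a
  · rw [if_pos hc, if_pos (h3.1 hc), h1, h2]
  · rw [if_neg hc, if_neg (fun hh => hc (h3.2 hh)), h1, h2]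

lemma reflectSeq_congr {m : ℕ} {s t : ℕ → ℤ} (L : List ℤ) (h : Agree m s t) :
    Agree m (reflectSeq L s) (reflectSeq L t) := by
  induction L generalizing s t with
  | nil => exact h
  | cons a L ih => exact ih (reflect_congr a h)

lemma validC_congr {m : ℕ} {s t : ℕ → ℤ} (L : List ℤ) (h : Agree m s t)
    (hv : ValidC m s L) : ValidC m t L := by
  induction L generalizing s t with
  | nil => trivial
  | cons a L ih =>
    rcases hv with ⟨⟨k, hk, hka⟩, hv⟩
    exact ⟨⟨k, hk, by rw [← h k (le_of_lt hk)]; exact hka⟩, ih (reflect_congr a h) hv⟩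

lemma validC_append {m : ℕ} {s : ℕ → ℤ} {L₁ L₂ : List ℤ}
    (h₁ : ValidC m s L₁) (h₂ : ValidC m (reflectSeq L₁ s) L₂) : ValidC m s (L₁ ++ L₂) := by
  induction L₁ generalizing s with
  | nil => exact h₂
  | cons a L ih =>
    rcases h₁ with ⟨h0, h1⟩
    exact ⟨h0, ih h1 h₂⟩

lemma validC_toFin {m : ℕ} : ∀ (L : List ℤ) (s : ℕ → ℤ), ValidC m s L →
    ∀ i : Fin L.length, ∃ k < m, reflectSeq (L.take i) s k = L.get i := by
  intro L
  induction L with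
  | nil => intro s _ i; exact absurd i.2 (by simp)
  | cons a L ih =>
    intro s h i
    rcases h with ⟨h1, h2⟩
    rcases i with ⟨iv, hiv⟩
    match iv with
    | 0 => simpa [reflectSeq] using h1
    | Nat.succ j =>
      have hj : j < L.length := by simpa using hiv
      have := ih (reflect a s) h2 ⟨j, hj⟩
      simpa [reflectSeq_cons, List.take_succ_cons] using this

lemma reflect_eq_flipFrom {a : ℤ} {s : ℕ → ℤ} {T : ℕ} (h0 : s 0 = 0)
    (hT : s T = a) (hlt : ∀ j < T, s j ≠ a) : ∀ n, reflect a s n = flipFrom T s n := by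
  have hcond : ∀ k : ℕ, (∀ j ≤ k, s j ≠ a) ↔ k < T := by
    intro k
    constructor
    · intro h
      by_contra hc
      exact h T (by omega) hT
    · intro h j hj
      exact hlt j (by omega)
  intro n
  induction n with
  | zero => simp [reflect, flipFrom, h0]
  | succ n ih =>
    have hstep : reflect a s (n+1) = reflect a s n +
        (if ∀ j ≤ n, s j ≠ a then s (n+1) - s n else s n - s (n+1)) := by
      unfold reflect; rw [Finset.sum_range_succ]
    rw [hstep, ih]
    unfold flipFrom
    rcases lt_trichotomy n T with h1 | h1 | h1
    · rw [if_pos ((hcond n).2 h1), if_pos (Nat.le_of_lt h1), if_pos (by omega : n + 1 ≤ T)]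
      ring
    · subst h1
      have hc : ¬ (∀ j ≤ n, s j ≠ a) := fun hh => absurd ((hcond n).1 hh) (lt_irrefl n)
      rw [if_neg hc, if_pos (le_refl n), if_neg (by omega : ¬ n + 1 ≤ n), hT]
      ring
    · have hc : ¬ (∀ j ≤ n, s j ≠ a) := fun hh => absurd ((hcond n).1 hh) (by omega)
      rw [if_neg hc, if_neg (by omega : ¬ n ≤ T), if_neg (by omega : ¬ n + 1 ≤ T)]
      ring

lemma InLambda_congr {m : ℕ} {s t : ℕ → ℤ} (h : Agree m s t) (hs : InLambda m s) :
    InLambda m t := by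
  constructor
  · rw [← h 0 (by omega)]; exact hs.1
  · intro k hk
    rw [← h (k+1) (by omega), ← h k (by omega)]
    exact hs.2 k hk

lemma InLambda_flipFrom {m : ℕ} {s : ℕ → ℤ} (T : ℕ) (hs : InLambda m s) :
    InLambda m (flipFrom T s) := by
  constructor
  · simp [flipFrom, hs.1]
  · intro k hk
    have h := hs.2 k hk
    simp only [flipFrom]
    rcases le_or_gt (k+1) T with h1 | h1
    · rw [if_pos h1, if_pos (by omega)]
      exact h
    · rcases le_or_gt k T with h2 | h2
      · have hkT : k = T := by omega
        subst hkT
        rw [if_neg (by omega), if_pos le_rfl]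
        omega
      · rw [if_neg (by omega), if_neg (by omega)]
        omega

lemma InLambda_mix {m : ℕ} {p u : ℕ → ℤ} (t : ℕ) (hp : InLambda m p) (hu : InLambda m u) :
    InLambda m (fun n => if n ≤ t then u n else u t + (p n - p t)) := by
  constructor
  · simp [hu.1]
  · intro k hk
    have h1 := hp.2 k hk
    have h2 := hu.2 k hk
    simp only
    rcases le_or_gt (k+1) t with ha | ha
    · rw [if_pos ha, if_pos (by omega)]
      exact h2
    · rcases le_or_gt k t with hb | hb
      · have hkt : k = t := by omega
        subst hkt
        rw [if_neg (by omega), if_pos le_rfl]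
        omega
      · rw [if_neg (by omega), if_neg (by omega)]
        omega

lemma agree_symm {m : ℕ} {s t : ℕ → ℤ} (h : Agree m s t) : Agree m t s :=
  fun n hn => (h n hn).symm

lemma agree_trans {m : ℕ} {s t u : ℕ → ℤ} (h₁ : Agree m s t) (h₂ : Agree m t u) :
    Agree m s u := fun n hn => (h₁ n hn).trans (h₂ n hn)

lemma flipFrom_congr {m : ℕ} {s t : ℕ → ℤ} (T : ℕ) (hT : T ≤ m) (h : Agree m s t) :
    Agree m (flipFrom T s) (flipFrom T t) := by
  intro n hn
  simp only [flipFrom]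
  rw [h n hn, h T hT]

def AGood (m t : ℕ) : Prop := ∀ p, InLambda m p →
  ∃ L, L ≠ [] ∧ Good L ∧ ValidC m p L ∧ Agree m (reflectSeq L p) (flipFrom t p)

lemma lemB (m : ℕ) : ∀ t, t < m → (∀ j ≤ t, AGood m j) →
    ∀ p u, InLambda m p → InLambda m u →
    ∃ G, Good G ∧ ValidC m p G ∧
      Agree m (reflectSeq G p) (fun n => if n ≤ t then u n else u t + (p n - p t)) := by
  intro t
  induction t with
  | zero =>
    intro _ _ p u hp hu
    refine ⟨[], by simp [Good], trivial, ?_⟩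
    intro n hn
    simp only [reflectSeq_nil]
    rcases Nat.eq_zero_or_pos n with h | h
    · subst h; simp [hp.1, hu.1]
    · rw [if_neg (by omega), hu.1, hp.1]; ring
  | succ t ih =>
    intro ht hA p u hp hu
    obtain ⟨G₁, hG₁good, hG₁val, hG₁agree⟩ :=
      ih (by omega) (fun j hj => hA j (by omega)) p u hp hu
    have hu2 := hu.2 t (by omega)
    have hp2 := hp.2 t (by omega)
    set r₀ := reflectSeq G₁ p with hr₀def
    have hr0 : ∀ n ≤ m, r₀ n = if n ≤ t then u n else u t + (p n - p t) := by
      intro n hn; simpa using hG₁agree n hn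
    by_cases hcase : u (t+1) = u t + (p (t+1) - p t)
    · refine ⟨G₁, hG₁good, hG₁val, ?_⟩
      intro n hn
      rw [show reflectSeq G₁ p = r₀ from rfl, hr0 n hn]
      simp only
      rcases le_or_gt n t with h1 | h1
      · rw [if_pos h1, if_pos (by omega)]
      · rcases le_or_gt n (t+1) with h2 | h2
        · have hn1 : n = t+1 := by omega
          subst hn1
          rw [if_neg (by omega), if_pos le_rfl]
          omega
        · rw [if_neg (by omega), if_neg (by omega)]
          omega
    · -- need to flip increment t+1
      have hrmL : InLambda m (fun n => if n ≤ t then u n else u t + (p n - p t)) :=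
        InLambda_mix t hp hu
      have hr₀L : InLambda m r₀ := InLambda_congr (agree_symm hG₁agree) hrmL
      obtain ⟨L₂, _, hL₂good, hL₂val, hL₂agree⟩ := hA t (by omega) r₀ hr₀L
      set r₁ := reflectSeq L₂ r₀ with hr₁def
      have hr0t : r₀ t = u t := by
        rw [hr0 t (by omega), if_pos le_rfl]
      have hr1 : ∀ n ≤ m, r₁ n = if n ≤ t then u n else u t + (p t - p n) := by
        intro n hn
        rw [hL₂agree n hn]
        simp only [flipFrom]
        rcases le_or_gt n t with h1 | h1
        · rw [if_pos h1, if_pos h1, hr0 n hn, if_pos h1]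
        · rw [if_neg (by omega), if_neg (by omega), hr0t, hr0 n hn, if_neg (by omega)]
          ring
      have hr₁L : InLambda m r₁ := by
        refine InLambda_congr (agree_symm ?_) (InLambda_flipFrom t hrmL)
        intro n hn
        rw [hr1 n hn]
        simp only [flipFrom]
        split_ifs <;> omega
      obtain ⟨L₃, _, hL₃good, hL₃val, hL₃agree⟩ := hA (t+1) le_rfl r₁ hr₁L
      have hr1t1 : r₁ (t+1) = u (t+1) := by
        rw [hr1 (t+1) (by omega), if_neg (by omega)]
        omega
      refine ⟨G₁ ++ (L₂ ++ L₃), good_append hG₁good (good_append hL₂good hL₃good), ?_, ?_⟩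
      · exact validC_append hG₁val (validC_append hL₂val hL₃val)
      · intro n hn
        rw [reflectSeq_append, reflectSeq_append, ← hr₀def, ← hr₁def, hL₃agree n hn]
        simp only [flipFrom]
        rcases le_or_gt n (t+1) with h1 | h1
        · rw [if_pos h1, if_pos h1]
          rcases le_or_gt n t with h2 | h2
          · rw [hr1 n hn, if_pos h2]
          · have hn1 : n = t+1 := by omega
            subst hn1
            exact hr1t1
        · rw [if_neg (by omega), if_neg (by omega), hr1t1, hr1 n hn, if_neg (by omega)]
          omega

lemma lemA_up (m : ℕ) (t' : ℕ) (ht : t' + 1 < m) (hIH : ∀ j, j ≤ t' → AGood m j)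
    (p : ℕ → ℤ) (hp : InLambda m p) (hup : p (t'+1) - p t' = 1) :
    ∃ L, L ≠ [] ∧ Good L ∧ ValidC m p L ∧ Agree m (reflectSeq L p) (flipFrom (t'+1) p) := by
  obtain ⟨a, k, ha, hak, hkt⟩ : ∃ (a : ℤ) (k : ℕ), (a = 1 ∨ a = 2) ∧
      (t' : ℤ) - 2*k = a - 1 ∧ k ≤ t' := by
    rcases Nat.even_or_odd t' with ⟨c, hc⟩ | ⟨c, hc⟩
    · exact ⟨1, c, Or.inl rfl, by push_cast; omega, by omega⟩
    · exact ⟨2, c, Or.inr rfl, by push_cast; omega, by omega⟩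
  set w : ℕ → ℤ := fun n => if n ≤ k then -(n:ℤ) else (n:ℤ) - 2*k with hwdef
  have hw : InLambda m w := by
    constructor
    · simp [hwdef]
    · intro j _
      simp only [hwdef]
      split_ifs <;> push_cast <;> omega
  have hwt' : w t' = a - 1 := by
    simp only [hwdef]
    split_ifs <;> push_cast <;> omega
  have hwlt : ∀ j ≤ t', w j ≠ a := by
    intro j hj
    simp only [hwdef]
    split_ifs <;> push_cast <;> omega
  obtain ⟨G₁, hG₁good, hG₁val, hG₁agree⟩ := lemB m t' (by omega) hIH p w hp hw
  set r₀ := reflectSeq G₁ p with hr₀def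
  have hr0 : ∀ n ≤ m, r₀ n = if n ≤ t' then w n else w t' + (p n - p t') := by
    intro n hn; simpa using hG₁agree n hn
  have hr₀L : InLambda m r₀ :=
    InLambda_congr (agree_symm hG₁agree) (InLambda_mix t' hp hw)
  have hhit : r₀ (t'+1) = a := by
    rw [hr0 (t'+1) (by omega), if_neg (by omega), hwt']
    omega
  have hmiss : ∀ j < t'+1, r₀ j ≠ a := by
    intro j hj
    rw [hr0 j (by omega), if_pos (by omega)]
    exact hwlt j (by omega)
  have h00 : r₀ 0 = 0 := hr₀L.1
  set r₁ := reflect a r₀ with hr₁def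
  have hrefl : ∀ n, r₁ n = flipFrom (t'+1) r₀ n := reflect_eq_flipFrom h00 hhit hmiss
  have hr1 : ∀ n ≤ m, r₁ n = if n ≤ t' then w n else a + 1 + p t' - p n := by
    intro n hn
    rw [hrefl n]
    simp only [flipFrom]
    rcases le_or_gt n t' with h1 | h1
    · rw [if_pos (by omega), hr0 n hn, if_pos h1, if_pos h1]
    · rcases le_or_gt n (t'+1) with h2 | h2
      · have hn1 : n = t'+1 := by omega
        subst hn1
        rw [if_pos le_rfl, hr0 (t'+1) (by omega), if_neg (by omega), if_neg (by omega), hwt']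
        omega
      · rw [if_neg (by omega), hhit, hr0 n hn, if_neg (by omega), if_neg (by omega), hwt']
        omega
  have hr₁L : InLambda m r₁ :=
    InLambda_congr (fun n hn => (hrefl n).symm) (InLambda_flipFrom (t'+1) hr₀L)
  obtain ⟨G₂, hG₂good, hG₂val, hG₂agree⟩ := lemB m t' (by omega) hIH r₁ p hr₁L hp
  have hr1t : r₁ t' = a - 1 := by
    rw [hr1 t' (by omega), if_pos le_rfl, hwt']
  refine ⟨G₁ ++ ([a] ++ G₂), by simp, ?_, ?_, ?_⟩
  · refine good_append hG₁good (good_append ?_ hG₂good)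
    intro b hb
    simp only [List.mem_singleton] at hb
    subst hb
    rcases ha with h | h <;> [right; right] <;> [left; right] <;> exact h
  · refine validC_append hG₁val ?_
    exact ⟨⟨t'+1, ht, hhit⟩, hG₂val⟩
  · intro n hn
    rw [reflectSeq_append, reflectSeq_append, ← hr₀def]
    rw [reflectSeq_cons, reflectSeq_nil, ← hr₁def, hG₂agree n hn]
    simp only [flipFrom, hr1t]
    rcases le_or_gt n t' with h1 | h1
    · rw [if_pos h1, if_pos (by omega)]
    · rw [if_neg (by omega), hr1 n hn, if_neg (by omega)]
      rcases le_or_gt n (t'+1) with h2 | h2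
      · have hn1 : n = t'+1 := by omega
        subst hn1
        rw [if_pos le_rfl]
        omega
      · rw [if_neg (by omega)]
        omega

lemma lemA (m : ℕ) (hm : 1 ≤ m) : ∀ t, t < m → AGood m t := by
  intro t
  induction t using Nat.strong_induction_on with
  | _ t IH =>
    intro ht p hp
    rcases t with _ | t'
    · refine ⟨[0], by simp, ?_, ⟨⟨0, by omega, hp.1⟩, trivial⟩, ?_⟩
      · intro b hb
        simp only [List.mem_singleton] at hb
        exact Or.inl hb
      · intro n hn
        exact reflect_eq_flipFrom hp.1 hp.1 (fun j hj => absurd hj (Nat.not_lt_zero j)) n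
    · have hIH' : ∀ j, j ≤ t' → AGood m j := fun j hj => IH j (by omega) (by omega)
      rcases hp.2 t' (by omega) with hup | hdown
      · exact lemA_up m t' ht hIH' p hp hup
      · obtain ⟨L₀, hL₀ne, hL₀good, hL₀val, hL₀agree⟩ := hIH' t' le_rfl p hp
        set p₀ := reflectSeq L₀ p with hp₀def
        have hp0 : ∀ n ≤ m, p₀ n = if n ≤ t' then p n else 2 * p t' - p n := by
          intro n hn; simpa [flipFrom] using hL₀agree n hn
        have hp₀L : InLambda m p₀ :=
          InLambda_congr (agree_symm hL₀agree) (InLambda_flipFrom t' hp)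
        have hup0 : p₀ (t'+1) - p₀ t' = 1 := by
          rw [hp0 (t'+1) (by omega), hp0 t' (by omega), if_pos le_rfl, if_neg (by omega)]
          omega
        obtain ⟨L₁, hL₁ne, hL₁good, hL₁val, hL₁agree⟩ := lemA_up m t' ht hIH' p₀ hp₀L hup0
        set p₁ := reflectSeq L₁ p₀ with hp₁def
        have hp1 : ∀ n ≤ m, p₁ n = if n ≤ t' then p n else p n + 2 := by
          intro n hn
          rw [hL₁agree n hn]
          simp only [flipFrom]
          rcases le_or_gt n t' with h1 | h1
          · rw [if_pos (by omega), hp0 n hn, if_pos h1, if_pos h1]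
          · rcases le_or_gt n (t'+1) with h2 | h2
            · have hn1 : n = t'+1 := by omega
              subst hn1
              rw [if_pos le_rfl, hp0 (t'+1) (by omega), if_neg (by omega), if_neg (by omega)]
              omega
            · rw [if_neg (by omega), hp0 (t'+1) (by omega), hp0 n hn,
                if_neg (by omega), if_neg (by omega), if_neg (by omega)]
              omega
        have hp₁L : InLambda m p₁ :=
          InLambda_congr (agree_symm hL₁agree) (InLambda_flipFrom (t'+1) hp₀L)
        obtain ⟨L₂, hL₂ne, hL₂good, hL₂val, hL₂agree⟩ := hIH' t' le_rfl p₁ hp₁L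
        refine ⟨L₀ ++ (L₁ ++ L₂), by simp [hL₀ne], ?_, ?_, ?_⟩
        · exact good_append hL₀good (good_append hL₁good hL₂good)
        · exact validC_append hL₀val (validC_append hL₁val hL₂val)
        · intro n hn
          rw [reflectSeq_append, reflectSeq_append, ← hp₀def, ← hp₁def, hL₂agree n hn]
          simp only [flipFrom]
          rw [hp1 t' (by omega), if_pos le_rfl]
          rcases le_or_gt n t' with h1 | h1
          · rw [if_pos h1, hp1 n hn, if_pos h1, if_pos (by omega)]
          · rw [if_neg (by omega), hp1 n hn, if_neg (by omega)]
            rcases le_or_gt n (t'+1) with h2 | h2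
            · have hn1 : n = t'+1 := by omega
              subst hn1
              rw [if_pos le_rfl]
              omega
            · rw [if_neg (by omega)]
              omega

lemma main_aux (m : ℕ) (hm : 1 ≤ m) (s' : ℕ → ℤ) (hs' : InLambda m s') :
    ∀ d (p : ℕ → ℤ), InLambda m p → (∀ n, n ≤ m → n + d ≤ m → p n = s' n) →
    Agree m p s' ∨ ∃ L, L ≠ [] ∧ Good L ∧ ValidC m p L ∧ Agree m (reflectSeq L p) s' := by
  intro d
  induction d with
  | zero =>
    intro p _ hag
    exact Or.inl (fun n hn => hag n hn (by omega))
  | succ d ih =>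
    intro p hp hag
    rcases le_or_gt m d with hd | hd
    · apply ih p hp
      intro n hn hnd
      have hn0 : n = 0 := by omega
      subst hn0
      rw [hp.1, hs'.1]
    · set n₀ := m - d with hn₀def
      have hn₀1 : 1 ≤ n₀ := by omega
      have hn₀m : n₀ ≤ m := by omega
      by_cases heq : p n₀ = s' n₀
      · apply ih p hp
        intro n hn hnd
        rcases lt_or_eq_of_le (show n ≤ n₀ by omega) with h | h
        · exact hag n hn (by omega)
        · rw [h]; exact heq
      · have ht' : n₀ - 1 < m := by omega
        obtain ⟨L₁, hL₁ne, hL₁good, hL₁val, hL₁agree⟩ := lemA m hm (n₀ - 1) ht' p hp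
        set q := reflectSeq L₁ p with hqdef
        have hqL : InLambda m q :=
          InLambda_congr (agree_symm hL₁agree) (InLambda_flipFrom (n₀-1) hp)
        have hq : ∀ n, n ≤ m → n + d ≤ m → q n = s' n := by
          intro n hn hnd
          rw [hL₁agree n hn]
          simp only [flipFrom]
          rcases le_or_gt n (n₀ - 1) with h1 | h1
          · rw [if_pos h1]
            exact hag n hn (by omega)
          · have hn1 : n = n₀ := by omega
            subst hn1
            rw [if_neg (by omega)]
            have e1 := hp.2 (n₀-1) (by omega)
            have e2 := hs'.2 (n₀-1) (by omega)
            have e3 : p (n₀ - 1) = s' (n₀ - 1) := hag (n₀-1) (by omega) (by omega)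
            have e4 : n₀ - 1 + 1 = n₀ := by omega
            rw [e4] at e1 e2
            omega
        rcases ih q hqL hq with hAg | ⟨L₂, _, hL₂good, hL₂val, hL₂agree⟩
        · exact Or.inr ⟨L₁, hL₁ne, hL₁good, hL₁val, hAg⟩
        · refine Or.inr ⟨L₁ ++ L₂, by simp [hL₁ne], good_append hL₁good hL₂good,
            validC_append hL₁val hL₂val, ?_⟩
          intro n hn
          rw [reflectSeq_append, ← hqdef]
          exact hL₂agree n hn

end RCh

/-- **Lemma 1.** For any two distinct elements `s, s'` of `Λ^m` there are levels
`a₁, …, a_k ∈ {0, 1, 2}` such that `s' = Θ^{a_k} ⋯ Θ^{a₁}(s)`; moreover the levels can be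
chosen so that `s ∈ Λ^m_{a₁}` and `Θ^{a_{i-1}} ⋯ Θ^{a₁}(s) ∈ Λ^m_{a_i}` for `i = 2, …, k`,
where `Λ^m_a = {s ∈ Λ^m : T_a(s) ≤ m - 1}`. -/
theorem exists_reflection_chain (m : ℕ) (hm : 1 ≤ m) (s s' : ℕ → ℤ)
    (hs : InLambda m s) (hs' : InLambda m s') (hne : ∃ n ≤ m, s n ≠ s' n) :
    ∃ L : List ℤ, L ≠ [] ∧ (∀ a ∈ L, a = 0 ∨ a = 1 ∨ a = 2) ∧
      (∀ n ≤ m, reflectSeq L s n = s' n) ∧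
      ∀ i : Fin L.length, ∃ k < m, reflectSeq (L.take i) s k = L.get i := by
  obtain ⟨n, hn, hnne⟩ := hne
  have h0 : ∀ n, n ≤ m → n + m ≤ m → s n = s' n := by
    intro n hn hnm
    have : n = 0 := by omega
    subst this
    rw [hs.1, hs'.1]
  rcases RCh.main_aux m hm s' hs' m s hs h0 with hAg | ⟨L, hLne, hLgood, hLval, hLagree⟩
  · exact absurd (hAg n hn) hnne
  · exact ⟨L, hLne, hLgood, hLagree, RCh.validC_toFin L s hLval⟩
end
end

section
/- Fix m ≥ 1 and let s̄^{(m)} be the alternating element of Λ^m defined by s̄^{(m)}_1 = 1 and s̄^{(m)}_k − s̄^{(m)}_{k−1} = −(s̄^{(m)}_{k−1} − s̄^{(m)}_{k−2}) for 2 ≤ k ≤ m (so s̄^{(m)} = (0,1,0,1,…)). Then for every s ∈ Λ^m with s ≠ s̄^{(m)}, there exist integers b_1, b_2, …, b_p ∈ {0, 1, 2} such that s̄^{(m)} = Θ^{b_p} Θ^{b_{p−1}} ⋯ Θ^{b_1}(s). -/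
open MeasureTheory ProbabilityTheory Filter Finset
open scoped ENNReal NNReal

noncomputable section

/-- The alternating path `s̄^(m) = (0, 1, 0, 1, …)`, i.e. `s̄_n = n mod 2`. -/
def sbar : ℕ → ℤ := fun n => (n % 2 : ℕ)

/-!
Write `mirrorAfter T a s` for the path that follows `s` up to time `T` and its mirror image
`2a - s` afterwards; `Θ^a s = mirrorAfter T a s` when `s` first hits `a` at time `T`.
On paths agreeing with `s̄` up to time `j`, a word in `Θ^0, Θ^1, Θ^2` acts as the mirror after
`j` at level `s̄_j`. For `j = 0` this is `Θ^0`. For `j + 1` conjugate: on a path agreeing with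
`s̄` up to `j + 1`, the mirror after `j` sends the value at `j + 1` to `-1` or `2`, a level not
visited before, so `Θ^0 Θ^1 Θ^0` (the reflection at level `-1`) or `Θ^2` mirrors after `j + 1`;
mirroring after `j` once more leaves the mirror after `j + 1` at level `s̄_{j+1}`.
Fixing the increments of a path of `Λ^m` from left to right with these words yields `s̄^(m)`.
-/

def mirrorAfter (T : ℕ) (a : ℤ) (s : ℕ → ℤ) : ℕ → ℤ := fun n =>
  if n ≤ T then s n else 2 * a - s n

lemma mirrorAfter_of_le {T n : ℕ} (a : ℤ) (s : ℕ → ℤ) (h : n ≤ T) :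
    mirrorAfter T a s n = s n := if_pos h

lemma mirrorAfter_of_lt {T n : ℕ} (a : ℤ) (s : ℕ → ℤ) (h : T < n) :
    mirrorAfter T a s n = 2 * a - s n := if_neg (Nat.not_le.mpr h)

lemma mirrorAfter_conj (T : ℕ) (b c : ℤ) (s : ℕ → ℤ) :
    mirrorAfter T c (mirrorAfter (T + 1) b (mirrorAfter T c s)) =
      mirrorAfter (T + 1) (2 * c - b) s := by
  funext n
  simp only [mirrorAfter]
  split_ifs <;> first | ring1 | omega

lemma reflect_succ (a : ℤ) (s : ℕ → ℤ) (n : ℕ) :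
    reflect a s (n + 1) = reflect a s n +
      if ∀ j ≤ n, s j ≠ a then s (n + 1) - s n else s n - s (n + 1) :=
  Finset.sum_range_succ _ _

lemma reflect_eq_mirrorAfter {a : ℤ} {s : ℕ → ℤ} {T : ℕ} (h0 : s 0 = 0) (hT : s T = a)
    (hlt : ∀ k < T, s k ≠ a) : reflect a s = mirrorAfter T a s := by
  have before_hit : ∀ k, (∀ j ≤ k, s j ≠ a) ↔ k < T := fun k =>
    ⟨fun hk => by by_contra! hTk; exact hk T hTk hT,
      fun hk j hj => hlt j (lt_of_le_of_lt hj hk)⟩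
  funext n
  induction n with
  | zero => simp [reflect, mirrorAfter, h0]
  | succ n ih =>
    rw [reflect_succ, ih]
    simp only [before_hit, mirrorAfter]
    split_ifs <;> first | ring1 | omega | (obtain rfl : n = T := by omega); rw [hT]; ring1

lemma reflect_zero_eq_neg {s : ℕ → ℤ} (h0 : s 0 = 0) : reflect 0 s = -s := by
  rw [reflect_eq_mirrorAfter h0 h0 (by omega)]
  funext n
  rcases Nat.eq_zero_or_pos n with rfl | hn
  · simp [mirrorAfter, h0]
  · simp [mirrorAfter_of_lt 0 s hn]

lemma reflectSeq_append (L₁ L₂ : List ℤ) (s : ℕ → ℤ) :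
    reflectSeq (L₁ ++ L₂) s = reflectSeq L₂ (reflectSeq L₁ s) :=
  List.foldl_append

lemma reflectSeq_zero_one_zero {s : ℕ → ℤ} {T : ℕ} (h0 : s 0 = 0) (hT : s T = -1)
    (hlt : ∀ k < T, s k ≠ -1) : reflectSeq [0, 1, 0] s = mirrorAfter T (-1) s := by
  have hneg : reflect 1 (-s) = mirrorAfter T 1 (-s) :=
    reflect_eq_mirrorAfter (by simp [h0]) (by simp [hT])
      (fun k hk => by simpa [neg_eq_iff_eq_neg] using hlt k hk)
  have h0' : reflect 1 (-s) 0 = 0 := by rw [hneg, mirrorAfter_of_le _ _ T.zero_le]; simp [h0]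
  show reflect 0 (reflect 1 (reflect 0 s)) = _
  rw [reflect_zero_eq_neg h0, reflect_zero_eq_neg h0', hneg]
  funext n
  simp only [mirrorAfter, Pi.neg_apply]
  split_ifs <;> ring

lemma sbar_zero : sbar 0 = 0 := rfl

lemma sbar_succ (n : ℕ) : sbar (n + 1) = 1 - sbar n := by
  simp only [sbar]; omega

lemma sbar_eq_zero_or_one (n : ℕ) : sbar n = 0 ∨ sbar n = 1 := by
  simp only [sbar]; omega

lemma exists_word_mirrorAfter_succ (j : ℕ) :
    ∃ M ⊆ [0, 1, 2], ∀ t : ℕ → ℤ, (∀ k ≤ j, t k = sbar k) →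
      t (j + 1) = 2 * sbar j - sbar (j + 1) →
        reflectSeq M t = mirrorAfter (j + 1) (t (j + 1)) t := by
  rcases sbar_eq_zero_or_one j with hj | hj
  · refine ⟨[0, 1, 0], by simp, fun t ht htj => ?_⟩
    have hT : t (j + 1) = -1 := by rw [htj, sbar_succ, hj]; ring
    rw [hT]
    refine reflectSeq_zero_one_zero (ht 0 j.zero_le) hT fun k hk => ?_
    rw [ht k (by omega)]
    rcases sbar_eq_zero_or_one k with h | h <;> rw [h] <;> decide
  · refine ⟨[2], by simp, fun t ht htj => ?_⟩
    have hT : t (j + 1) = 2 := by rw [htj, sbar_succ, hj]; ring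
    rw [hT]
    refine reflect_eq_mirrorAfter (ht 0 j.zero_le) hT fun k hk => ?_
    rw [ht k (by omega)]
    rcases sbar_eq_zero_or_one k with h | h <;> rw [h] <;> decide

lemma exists_word_mirrorAfter (j : ℕ) :
    ∃ L ⊆ [0, 1, 2], ∀ s : ℕ → ℤ, (∀ k ≤ j, s k = sbar k) →
      reflectSeq L s = mirrorAfter j (sbar j) s := by
  induction j with
  | zero =>
    refine ⟨[0], by simp, fun s hs => ?_⟩
    exact reflect_eq_mirrorAfter (hs 0 le_rfl) (hs 0 le_rfl) (by omega)
  | succ j ih =>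
    obtain ⟨L, hL, hLs⟩ := ih
    obtain ⟨M, hM, hMt⟩ := exists_word_mirrorAfter_succ j
    refine ⟨L ++ M ++ L, by simp [hL, hM], fun s hs => ?_⟩
    set t := mirrorAfter j (sbar j) s with ht_def
    have ht : ∀ k ≤ j, t k = sbar k := fun k hk => by
      rw [ht_def, mirrorAfter_of_le _ _ hk, hs k (by omega)]
    have htj : t (j + 1) = 2 * sbar j - sbar (j + 1) := by
      rw [ht_def, mirrorAfter_of_lt _ _ j.lt_add_one, hs (j + 1) le_rfl]
    have hu : ∀ k ≤ j, mirrorAfter (j + 1) (t (j + 1)) t k = sbar k := fun k hk => by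
      rw [mirrorAfter_of_le _ _ (by omega), ht k hk]
    rw [reflectSeq_append, reflectSeq_append, hLs s (fun k hk => hs k (by omega)),
      hMt t ht htj, hLs _ hu, mirrorAfter_conj, htj, sub_sub_cancel]

lemma InLambda.reflect {m : ℕ} {s : ℕ → ℤ} (h : InLambda m s) (a : ℤ) :
    InLambda m (reflect a s) := by
  refine ⟨Finset.sum_range_zero _, fun k hk => ?_⟩
  have := h.2 k hk
  rw [reflect_succ]
  split <;> omega

lemma InLambda.reflectSeq {m : ℕ} {s : ℕ → ℤ} (h : InLambda m s) (L : List ℤ) :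
    InLambda m (reflectSeq L s) := by
  induction L generalizing s with
  | nil => exact h
  | cons a L ih => exact ih (h.reflect a)

lemma exists_word_agree_succ {j : ℕ} {s : ℕ → ℤ}
    (hstep : s (j + 1) - s j = 1 ∨ s (j + 1) - s j = -1) (hs : ∀ k ≤ j, s k = sbar k) :
    ∃ L ⊆ [0, 1, 2], ∀ k ≤ j + 1, reflectSeq L s k = sbar k := by
  by_cases hj : s (j + 1) = sbar (j + 1)
  · exact ⟨[], List.nil_subset _, fun k hk => by
      rcases Nat.lt_or_eq_of_le hk with hk | rfl
      exacts [hs k (by omega), hj]⟩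
  obtain ⟨L, hL, hLs⟩ := exists_word_mirrorAfter j
  refine ⟨L, hL, fun k hk => ?_⟩
  rw [hLs s hs]
  rcases Nat.lt_or_eq_of_le hk with hk | hk
  · rw [mirrorAfter_of_le _ _ (by omega), hs k (by omega)]
  · rw [hk]
    have hsj := hs j le_rfl
    rw [mirrorAfter_of_lt _ _ j.lt_add_one]
    rw [sbar_succ] at hj ⊢
    rcases sbar_eq_zero_or_one j with h | h <;> omega

lemma exists_word_of_agree {m : ℕ} (d : ℕ) :
    ∀ j s, j + d = m → InLambda m s → (∀ k ≤ j, s k = sbar k) →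
      ∃ L ⊆ [0, 1, 2], ∀ n ≤ m, reflectSeq L s n = sbar n := by
  induction d with
  | zero => exact fun j s hj _ hs => ⟨[], List.nil_subset _, fun n hn => hs n (by omega)⟩
  | succ d ih =>
    intro j s hj hsm hs
    obtain ⟨L, hL, hLs⟩ := exists_word_agree_succ (hsm.2 j (by omega)) hs
    obtain ⟨L', hL', hL's⟩ := ih (j + 1) _ (by omega) (hsm.reflectSeq L) hLs
    exact ⟨L ++ L', List.append_subset.mpr ⟨hL, hL'⟩, by rwa [reflectSeq_append]⟩

theorem exists_reflection_chain_to_alternating_general (m : ℕ) (s : ℕ → ℤ)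
    (hs : InLambda m s) :
    ∃ L : List ℤ, (∀ a ∈ L, a = 0 ∨ a = 1 ∨ a = 2) ∧
      ∀ n ≤ m, reflectSeq L s n = sbar n := by
  obtain ⟨L, hL, hLs⟩ := exists_word_of_agree m 0 s (zero_add m) hs fun k hk => by
    rw [Nat.le_zero.mp hk, hs.1, sbar_zero]
  exact ⟨L, fun a ha => by simpa using hL ha, hLs⟩

/-- **Reduction step in Lemma 1.** For every `s ∈ Λ^m` distinct from the alternating path
`s̄^(m) = (0,1,0,1,…)`, there are levels `b₁, …, b_p ∈ {0, 1, 2}` such that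
`s̄^(m) = Θ^{b_p} Θ^{b_{p-1}} ⋯ Θ^{b₁}(s)`. -/
theorem exists_reflection_chain_to_alternating (m : ℕ) (hm : 1 ≤ m) (s : ℕ → ℤ)
    (hs : InLambda m s) (hne : ∃ n ≤ m, s n ≠ sbar n) :
    ∃ L : List ℤ, (∀ a ∈ L, a = 0 ∨ a = 1 ∨ a = 2) ∧
      ∀ n ≤ m, reflectSeq L s n = sbar n :=
  exists_reflection_chain_to_alternating_general m s hs
end
end

section
/- Let M be a discrete skip free process such that Θ^a(M) ≐ M for a = 0 and a = 1. For an integer a ≥ 0 let σ_a = inf{n ≥ 0 : |M_n| = a} be the first exit time from (−a, a), and define Ψ^a(M)_n = Σ_{k=1}^n (1_{k ≤ σ_a} − 1_{k > σ_a}) ΔM_k. Then Ψ^a(M) ≐ M for a = 0 and a = 1. -/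
open MeasureTheory ProbabilityTheory Filter Finset
open scoped ENNReal NNReal

noncomputable section

/-- The quadratic variation `[s]_n` of a discrete path `s`. -/
def qv (s : ℕ → ℤ) (n : ℕ) : ℕ :=
  ∑ k ∈ Finset.range n, (s (k + 1) - s k).natAbs ^ 2

/-- A (deterministic) skip free path: starts at `0` and has increments in `{-1, 0, 1}`. -/
def SkipFreePath (s : ℕ → ℤ) : Prop :=
  s 0 = 0 ∧ ∀ n, s (n + 1) - s n = 1 ∨ s (n + 1) - s n = 0 ∨ s (n + 1) - s n = -1

/-- The uniform law on `{-1, +1} ⊆ ℤ`. -/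
def bern : Measure ℤ :=
  (2 : ℝ≥0∞)⁻¹ • Measure.dirac (1 : ℤ) + (2 : ℝ≥0∞)⁻¹ • Measure.dirac (-1 : ℤ)

/-- `S` is a symmetric Bernoulli random walk: `S_0 = 0` a.s. and the increments are
i.i.d. uniform on `{-1, +1}`. -/
def IsBernoulliRW {Ω : Type*} [MeasurableSpace Ω] (P : Measure Ω) (S : ℕ → Ω → ℤ) : Prop :=
  (∀ᵐ ω ∂P, S 0 ω = 0) ∧
    iIndepFun (fun n ω => S (n + 1) ω - S n ω) P ∧
    ∀ n, Measure.map (fun ω => S (n + 1) ω - S n ω) P = bern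

/-- `M` is a discrete Ocone local martingale: it is equal in law to a symmetric Bernoulli
random walk time changed by an independent nondecreasing `ℕ`-valued process with
increments in `{0, 1}`. -/
def IsDiscreteOcone {Ω : Type*} [MeasurableSpace Ω] (P : Measure Ω) (M : ℕ → Ω → ℤ) : Prop :=
  ∃ (Ω' : Type) (_ : MeasurableSpace Ω') (P' : Measure Ω') (S : ℕ → Ω' → ℤ) (A : ℕ → Ω' → ℕ),
    IsProbabilityMeasure P' ∧ IsBernoulliRW P' S ∧
    (∀ ω, A 0 ω = 0) ∧ (∀ ω n, A (n + 1) ω = A n ω ∨ A (n + 1) ω = A n ω + 1) ∧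
    IndepFun (fun ω => (S · ω)) (fun ω => (A · ω)) P' ∧
    Measure.map (fun ω => (fun n => M n ω)) P
      = Measure.map (fun ω => (fun n => S (A n ω) ω)) P'

/-- The successive times at which the quadratic variation of `s` increases:
`τ_0 = 0` and `τ_{n+1} = inf {k > τ_n : [s]_k = n + 1}`, with `inf ∅ = τ_n`. -/
def tauP (s : ℕ → ℤ) : ℕ → ℕ
  | 0 => 0
  | n + 1 => max (tauP s n) (sInf {k | tauP s n < k ∧ qv s k = n + 1})

/-- The time-changed path `S^s = (s_{τ_n})_n`. -/
def SM (s : ℕ → ℤ) : ℕ → ℤ := fun n => s (tauP s n)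

/-- Reflection of a discrete path at the first exit time `σ_a = inf {n : |s_n| = a}` of
the interval `(-a, a)`: `Ψ^a(s)_n = ∑_{k=1}^n (1_{k ≤ σ_a} - 1_{k > σ_a}) (s_k - s_{k-1})`,
where `k ≤ σ_a(s)` iff `|s_j| ≠ a` for every `j < k`. -/
def exitReflect (a : ℤ) (s : ℕ → ℤ) : ℕ → ℤ := fun n =>
  ∑ k ∈ Finset.range n, if ∀ j ≤ k, |s j| ≠ a then s (k + 1) - s k else s k - s (k + 1)

/-! For `a = 0` the two reflections coincide, since `σ_0 = T_0`. For `a = 1`, let `U` be the event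
that `M` does not visit `-1` before `1`: on `U` we have `σ_1 = T_1`, so `Ψ^1 = Θ^1`, and off `U`
we have `σ_1 = T_{-1}`, so `Ψ^1 = Θ^{-1}`. Both `Θ^1` and `Θ^{-1} = -Θ^1(-·)` preserve the law
of `M` (the latter because `-M = Θ^0(M) ≐ M`), and both leave `U` invariant, because a reflection
at `c` does not change the path up to `T_c`. Two law-preserving maps glued along an event that
both leave invariant preserve the law. -/

namespace MeasureTheory.MeasurePreserving

variable {α : Type*} [MeasurableSpace α] {μ : Measure α} {U : Set α} {f g φ : α → α}

lemma of_eqOn_of_eqOn_compl (hU : MeasurableSet U) (hf : MeasurePreserving f μ μ)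
    (hg : MeasurePreserving g μ μ) (hfU : f ⁻¹' U =ᵐ[μ] U) (hgU : g ⁻¹' U =ᵐ[μ] U)
    (hφf : Set.EqOn φ f U) (hφg : Set.EqOn φ g Uᶜ) : MeasurePreserving φ μ μ := by
  classical
  have hφ : φ = U.piecewise f g := funext fun x => by
    by_cases hx : x ∈ U
    · rw [Set.piecewise_eq_of_mem _ _ _ hx, hφf hx]
    · rw [Set.piecewise_eq_of_notMem _ _ _ hx, hφg hx]
  subst hφ
  refine ⟨hf.measurable.piecewise hU hg.measurable, Measure.ext fun E hE => ?_⟩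
  have hfE : (f ⁻¹' E ∩ U : Set α) =ᵐ[μ] f ⁻¹' (E ∩ U) := (ae_eq_refl (f ⁻¹' E)).inter hfU.symm
  have hgE : (g ⁻¹' E \ U : Set α) =ᵐ[μ] g ⁻¹' (E \ U) := (ae_eq_refl (g ⁻¹' E)).diff hgU.symm
  rw [Measure.map_apply (hf.measurable.piecewise hU hg.measurable) hE, Set.piecewise_preimage,
    Set.ite, measure_union (Set.disjoint_sdiff_right.mono_left Set.inter_subset_right)
      ((hg.measurable hE).diff hU), measure_congr hfE, measure_congr hgE,
    hf.measure_preimage (hE.inter hU).nullMeasurableSet,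
    hg.measure_preimage (hE.diff hU).nullMeasurableSet, measure_inter_add_sdiff E hU]

end MeasureTheory.MeasurePreserving

namespace SkipFree

lemma measurable_reflect (a : ℤ) : Measurable (reflect a) :=
  measurable_pi_lambda _ fun _ => Finset.measurable_sum _ fun _ _ =>
    Measurable.ite (Measurable.setOf (by fun_prop)) (by fun_prop) (by fun_prop)

lemma exitReflect_zero : exitReflect 0 = reflect 0 := by
  funext s n
  simp only [exitReflect, reflect, ne_eq, abs_eq_zero]

lemma reflect_zero_of_apply_zero {s : ℕ → ℤ} (h0 : s 0 = 0) : reflect 0 s = -s := by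
  funext n
  have hcond : ∀ k, ¬∀ j ≤ k, s j ≠ 0 := fun k h => h 0 k.zero_le h0
  simp only [reflect, hcond, if_false, Finset.sum_range_sub', h0, zero_sub, Pi.neg_apply]

lemma reflect_neg (a : ℤ) (s : ℕ → ℤ) : reflect (-a) (-s) = -reflect a s := by
  funext n
  simp only [reflect, Pi.neg_apply, ne_eq, neg_inj, ← Finset.sum_neg_distrib]
  refine Finset.sum_congr rfl fun k _ => ?_
  split_ifs <;> ring

lemma reflect_neg_one (s : ℕ → ℤ) : reflect (-1) s = -reflect 1 (-s) := by
  rw [← reflect_neg, neg_neg]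

lemma reflect_apply_of_forall_lt_ne {s : ℕ → ℤ} (h0 : s 0 = 0) {a : ℤ} {n : ℕ}
    (h : ∀ j < n, s j ≠ a) : reflect a s n = s n := by
  have hcond : ∀ k ∈ Finset.range n, ∀ j ≤ k, s j ≠ a :=
    fun k hk j hj => h j (hj.trans_lt (Finset.mem_range.mp hk))
  rw [reflect, Finset.sum_congr rfl fun k hk => if_pos (hcond k hk), Finset.sum_range_sub, h0,
    sub_zero]

def AgreeUntilHit (c : ℤ) (s t : ℕ → ℤ) : Prop :=
  ∀ n, (∀ j < n, s j ≠ c) → t n = s n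

lemma AgreeUntilHit.symm {c : ℤ} {s t : ℕ → ℤ} (h : AgreeUntilHit c s t) :
    AgreeUntilHit c t s := by
  intro n ht
  have hs : ∀ m ≤ n, ∀ j < m, s j ≠ c := by
    intro m hm
    induction m with
    | zero => simp
    | succ m ih =>
      intro j hj
      rcases Nat.lt_succ_iff_lt_or_eq.mp hj with hj | rfl
      · exact ih (by omega) j hj
      · rw [← h j (ih (by omega))]
        exact ht j (by omega)
  exact (h n (hs n le_rfl)).symm

lemma agreeUntilHit_reflect {s : ℕ → ℤ} (h0 : s 0 = 0) (c : ℤ) :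
    AgreeUntilHit c s (reflect c s) :=
  fun _ => reflect_apply_of_forall_lt_ne h0

def NotHitBefore (a b : ℤ) : Set (ℕ → ℤ) :=
  {s | ∀ n, s n = a → ∃ m < n, s m = b}

lemma measurableSet_notHitBefore (a b : ℤ) : MeasurableSet (NotHitBefore a b) :=
  Measurable.setOf (by fun_prop)

lemma mem_notHitBefore_of_agreeUntilHit {a b c : ℤ} (hc : c = a ∨ c = b) {s t : ℕ → ℤ}
    (hts : AgreeUntilHit c t s) (hs : s ∈ NotHitBefore a b) : t ∈ NotHitBefore a b := by
  intro n
  induction n using Nat.strong_induction_on with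
  | _ n ih =>
  intro htn
  by_cases h : ∀ j < n, t j ≠ c
  · have hst : ∀ k ≤ n, s k = t k := fun k hk => hts k fun j hj => h j (by omega)
    obtain ⟨m, hm, hsm⟩ := hs n (by rw [hst n le_rfl, htn])
    exact ⟨m, hm, by rw [← hst m hm.le, hsm]⟩
  · push Not at h
    obtain ⟨j, hj, htj⟩ := h
    rcases hc with rfl | rfl
    · obtain ⟨m, hm, htm⟩ := ih j hj htj
      exact ⟨m, hm.trans hj, htm⟩
    · exact ⟨j, hj, htj⟩

lemma reflect_mem_notHitBefore_iff {s : ℕ → ℤ} (h0 : s 0 = 0) {a b c : ℤ} (hc : c = a ∨ c = b) :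
    reflect c s ∈ NotHitBefore a b ↔ s ∈ NotHitBefore a b :=
  ⟨mem_notHitBefore_of_agreeUntilHit hc (agreeUntilHit_reflect h0 c),
    mem_notHitBefore_of_agreeUntilHit hc (agreeUntilHit_reflect h0 c).symm⟩

lemma exitReflect_one_eq_reflect {s : ℕ → ℤ} {c : ℤ}
    (h : ∀ k, (∀ j ≤ k, |s j| ≠ 1) ↔ ∀ j ≤ k, s j ≠ c) : exitReflect 1 s = reflect c s := by
  funext n
  simp only [exitReflect, reflect, h]

lemma exitReflect_one_of_mem {s : ℕ → ℤ} (hs : s ∈ NotHitBefore (-1) 1) :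
    exitReflect 1 s = reflect 1 s := by
  refine exitReflect_one_eq_reflect fun k =>
    ⟨fun h j hj hsj => h j hj (by rw [hsj]; rfl), fun h j hj habs => ?_⟩
  rcases abs_eq_abs.mp (habs.trans abs_one.symm) with hsj | hsj
  · exact h j hj hsj
  · obtain ⟨m, hm, hsm⟩ := hs j hsj
    exact h m (hm.le.trans hj) hsm

lemma exitReflect_one_of_not_mem {s : ℕ → ℤ} (hs : s ∉ NotHitBefore (-1) 1) :
    exitReflect 1 s = reflect (-1) s := by
  obtain ⟨n, hn, hfirst⟩ : ∃ n, s n = -1 ∧ ∀ m < n, s m ≠ 1 := by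
    simpa [NotHitBefore] using hs
  refine exitReflect_one_eq_reflect fun k =>
    ⟨fun h j hj hsj => h j hj (by rw [hsj]; rfl), fun h j hj habs => ?_⟩
  rcases abs_eq_abs.mp (habs.trans abs_one.symm) with hsj | hsj
  · exact h n (le_trans (not_lt.mp fun hjn => hfirst j hjn hsj) hj) hn
  · exact h j hj hsj

lemma measurePreserving_exitReflect_one {μ : Measure (ℕ → ℤ)} (hμ0 : ∀ᵐ s ∂μ, s 0 = 0)
    (h0 : MeasurePreserving (reflect 0) μ μ) (h1 : MeasurePreserving (reflect 1) μ μ) :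
    MeasurePreserving (exitReflect 1) μ μ := by
  have hneg : MeasurePreserving (fun s => -s) μ μ :=
    h0.congr measurable_neg (hμ0.mono fun _ hs => reflect_zero_of_apply_zero hs)
  have hm1 : MeasurePreserving (reflect (-1)) μ μ := by
    rw [show reflect (-1) = (fun s => -s) ∘ reflect 1 ∘ (fun s => -s) from funext reflect_neg_one]
    exact hneg.comp (h1.comp hneg)
  have hinv : ∀ c, c = -1 ∨ c = 1 →
      reflect c ⁻¹' NotHitBefore (-1) 1 =ᵐ[μ] NotHitBefore (-1) 1 :=
    fun _ hc => hμ0.mono fun _ hs => propext (reflect_mem_notHitBefore_iff hs hc)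
  exact .of_eqOn_of_eqOn_compl (measurableSet_notHitBefore _ _) h1 hm1 (hinv 1 (.inr rfl))
    (hinv (-1) (.inl rfl)) (fun _ => exitReflect_one_of_mem) (fun _ => exitReflect_one_of_not_mem)

end SkipFree

open SkipFree in
theorem exitReflect_law_eq_general
    {Ω : Type*} [MeasurableSpace Ω] (P : Measure Ω)
    (M : ℕ → Ω → ℤ) (hmeas : ∀ n, Measurable (M n))
    (hskip : ∀ ω, SkipFreePath (fun n => M n ω))
    (hrefl : ∀ a : ℤ, a = 0 ∨ a = 1 →
      Measure.map (fun ω => reflect a (fun n => M n ω)) P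
        = Measure.map (fun ω => (fun n => M n ω)) P) :
    ∀ a : ℤ, a = 0 ∨ a = 1 →
      Measure.map (fun ω => exitReflect a (fun n => M n ω)) P
        = Measure.map (fun ω => (fun n => M n ω)) P := by
  have hM : Measurable fun ω n => M n ω := measurable_pi_lambda _ hmeas
  set μ := P.map fun ω n => M n ω
  have hθ : ∀ c, c = 0 ∨ c = 1 → MeasurePreserving (reflect c) μ μ := fun c hc =>
    ⟨measurable_reflect c, by rw [Measure.map_map (measurable_reflect c) hM]; exact hrefl c hc⟩
  have hμ0 : ∀ᵐ s ∂μ, s 0 = 0 :=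
    (ae_map_iff hM.aemeasurable (measurableSet_eq_fun (measurable_pi_apply 0) measurable_const)).2
      (ae_of_all _ fun ω => (hskip ω).1)
  intro a ha
  suffices hΨ : MeasurePreserving (exitReflect a) μ μ from
    (Measure.map_map hΨ.measurable hM).symm.trans hΨ.map_eq
  rcases ha with rfl | rfl
  · exact exitReflect_zero ▸ hθ 0 (.inl rfl)
  · exact measurePreserving_exitReflect_one hμ0 (hθ 0 (.inl rfl)) (hθ 1 (.inr rfl))

/-- **First step in the proof of Lemma 2.** If a skip free process `M` satisfies
`Θ^a(M) ≐ M` for `a = 0` and `a = 1`, then also `Ψ^a(M) ≐ M` for `a = 0` and `a = 1`. -/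
theorem exitReflect_law_eq
    {Ω : Type*} [MeasurableSpace Ω] (P : Measure Ω) [IsProbabilityMeasure P]
    (M : ℕ → Ω → ℤ) (hmeas : ∀ n, Measurable (M n))
    (hskip : ∀ ω, SkipFreePath (fun n => M n ω))
    (hrefl : ∀ a : ℤ, a = 0 ∨ a = 1 →
      Measure.map (fun ω => reflect a (fun n => M n ω)) P
        = Measure.map (fun ω => (fun n => M n ω)) P) :
    ∀ a : ℤ, a = 0 ∨ a = 1 →
      Measure.map (fun ω => exitReflect a (fun n => M n ω)) P
        = Measure.map (fun ω => (fun n => M n ω)) P :=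
  exitReflect_law_eq_general P M hmeas hskip hrefl
end
end

section
/- Let (Ω, F, P) be a probability space and let Θ : Ω → Ω be a measurable transformation which preserves P. A random variable X ∈ L²(Ω, F, P) satisfies X ∘ Θ = X almost surely if and only if E[X · (Y ∘ Θ)] = E[X · Y] for all Y ∈ L²(Ω, F, P). -/
/-! The forward direction is the change of variables `∫ (X * Y) ∘ Θ = ∫ X * Y`. For the converse,
take `Y = X`: since `Θ` preserves `‖X‖₂`, `‖X ∘ Θ - X‖₂² = 2 ‖X‖₂² - 2 ∫ X * (X ∘ Θ) = 0`. -/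

open MeasureTheory

namespace MeasureTheory

variable {α β : Type*} [MeasurableSpace α] [MeasurableSpace β] {μ : Measure α}

theorem MeasurePreserving.integral_comp_of_aestronglyMeasurable {E : Type*}
    [NormedAddCommGroup E] [NormedSpace ℝ E] {ν : Measure β} {Θ : α → β}
    (hΘ : MeasurePreserving Θ μ ν) {f : β → E} (hf : AEStronglyMeasurable f ν) :
    ∫ x, f (Θ x) ∂μ = ∫ y, f y ∂ν := by
  rw [← hΘ.map_eq] at hf ⊢
  exact (integral_map hΘ.aemeasurable hf).symm

theorem integral_sub_sq {f g : α → ℝ} (hf : MemLp f 2 μ) (hg : MemLp g 2 μ) :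
    ∫ x, (f x - g x) ^ 2 ∂μ = ∫ x, f x ^ 2 ∂μ - 2 * ∫ x, f x * g x ∂μ + ∫ x, g x ^ 2 ∂μ := by
  have h2fg : Integrable (fun x => 2 * (f x * g x)) μ := (hf.integrable_mul hg).const_mul 2
  have hdiff : Integrable (fun x => f x ^ 2 - 2 * (f x * g x)) μ := hf.integrable_sq.sub h2fg
  simp_rw [sub_sq, mul_assoc]
  rw [integral_add hdiff hg.integrable_sq, integral_sub hf.integrable_sq h2fg, integral_const_mul]

theorem ae_eq_of_integral_sub_sq_eq_zero {f g : α → ℝ} (hf : MemLp f 2 μ) (hg : MemLp g 2 μ)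
    (h : ∫ x, (f x - g x) ^ 2 ∂μ = 0) : f =ᵐ[μ] g := by
  have hsq : (fun x => (f x - g x) ^ 2) =ᵐ[μ] 0 :=
    (integral_eq_zero_iff_of_nonneg (fun x => sq_nonneg _) (hf.sub hg).integrable_sq).mp h
  filter_upwards [hsq] with x hx
  exact sub_eq_zero.mp (pow_eq_zero_iff two_ne_zero |>.mp hx)

end MeasureTheory

theorem invariant_iff_integral_comp_eq_general
    {Ω : Type*} [MeasurableSpace Ω] (P : Measure Ω)
    (Θ : Ω → Ω) (hΘ : MeasurePreserving Θ P P)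
    (X : Ω → ℝ) (hX : MemLp X 2 P) :
    (fun ω => X (Θ ω)) =ᵐ[P] X ↔
      ∀ Y : Ω → ℝ, MemLp Y 2 P →
        ∫ ω, X ω * Y (Θ ω) ∂P = ∫ ω, X ω * Y ω ∂P := by
  constructor
  · intro hinv Y hY
    calc ∫ ω, X ω * Y (Θ ω) ∂P = ∫ ω, X (Θ ω) * Y (Θ ω) ∂P := by
          refine integral_congr_ae ?_
          filter_upwards [hinv] with ω hω
          rw [hω]
      _ = ∫ ω, X ω * Y ω ∂P :=
          hΘ.integral_comp_of_aestronglyMeasurable (f := fun ω => X ω * Y ω)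
            (hX.aestronglyMeasurable.mul hY.aestronglyMeasurable)
  · intro h
    have hXΘ : MemLp (fun ω => X (Θ ω)) 2 P := hX.comp_measurePreserving hΘ
    have hnorm : ∫ ω, X (Θ ω) ^ 2 ∂P = ∫ ω, X ω ^ 2 ∂P :=
      hΘ.integral_comp_of_aestronglyMeasurable (f := fun ω => X ω ^ 2)
        (hX.aestronglyMeasurable.pow 2)
    have hcorr : ∫ ω, X (Θ ω) * X ω ∂P = ∫ ω, X ω ^ 2 ∂P := by
      simpa only [mul_comm, sq] using h X hX
    refine ae_eq_of_integral_sub_sq_eq_zero hXΘ hX ?_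
    rw [integral_sub_sq hXΘ hX, hnorm, hcorr]
    ring

/-- **Lemma 4 (classical ergodic-theoretic lemma).** Let `Θ` be a measurable
transformation of a probability space `(Ω, F, P)` preserving `P`. A random variable
`X ∈ L²(Ω, F, P)` is a.s. invariant by `Θ` if and only if
`E[X ⬝ (Y ∘ Θ)] = E[X ⬝ Y]` for every `Y ∈ L²(Ω, F, P)`. -/
theorem invariant_iff_integral_comp_eq
    {Ω : Type*} [MeasurableSpace Ω] (P : Measure Ω) [IsProbabilityMeasure P]
    (Θ : Ω → Ω) (hΘ : MeasurePreserving Θ P P)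
    (X : Ω → ℝ) (hX : MemLp X 2 P) :
    (fun ω => X (Θ ω)) =ᵐ[P] X ↔
      ∀ Y : Ω → ℝ, MemLp Y 2 P →
        ∫ ω, X ω * Y (Θ ω) ∂P = ∫ ω, X ω * Y ω ∂P :=
  invariant_iff_integral_comp_eq_general P Θ hΘ X hX
end

section
/- Let (ε_k)_{k≥0} be i.i.d. symmetric Bernoulli random variables and let M be the skip free process defined by M_0 = 0 and M_n = Σ_{j=1}^n ε_{⌊log₂ j⌋} for n ≥ 1. Then 0 and 1 are the only nonnegative integer levels at which the reflection principle holds for M: for a nonnegative integer a, Θ^a(M) ≐ M if and only if a ∈ {0, 1}. -/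
open MeasureTheory ProbabilityTheory Filter Finset
open scoped ENNReal NNReal

noncomputable section

/-! The increments of `M = dyadicPath ε` are constant on every dyadic block `[2 ^ k, 2 ^ (k + 1))`,
and reflection at `a` breaks this as soon as `T_a` and `T_a + 1` lie in the same block. For
`a ≥ 2` this happens with positive probability (`M` climbs straight to `a`, or first steps down
once when `a + 1` is a power of two), so `Θ^a(M)` charges a set of paths that `M` never visits.
For `a = 0`, `Θ^0(M) = -M`. For `a = 1`, `M` first reaches `1` exactly at the end of the block of
the first sign `+1`, so `Θ^1(M)` is the dyadic path of the signs flipped after their first `+1`;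
this predictable flip preserves the law of an i.i.d. symmetric sequence. -/

instance : IsProbabilityMeasure bern :=
  ⟨by simp [bern, ENNReal.inv_two_add_inv_two]⟩

lemma map_neg_bern : bern.map Neg.neg = bern := by
  simp [bern, Measure.map_add _ _ measurable_neg, Measure.map_smul, add_comm]

lemma bern_singleton_neg (x : ℤ) : bern {-x} = bern {x} := by
  conv_rhs => rw [← map_neg_bern]
  rw [Measure.map_apply measurable_neg (measurableSet_singleton x), Set.neg_preimage,
    Set.neg_singleton]

lemma ae_bern : ∀ᵐ x ∂bern, x = 1 ∨ x = -1 := by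
  simp [bern]

abbrev bernoulliSeq : Measure (ℕ → ℤ) := Measure.infinitePi fun _ => bern

lemma ae_bernoulliSeq : ∀ᵐ e ∂bernoulliSeq, ∀ i, e i = 1 ∨ e i = -1 :=
  ae_all_iff.2 fun i => ae_of_ae_map (measurable_pi_apply i).aemeasurable
    (by rw [Measure.infinitePi_map_eval (fun _ => bern) i]; exact ae_bern)

lemma bernoulliSeq_pi_Iic (n : ℕ) (v : ℕ → ℤ) :
    bernoulliSeq (Set.pi (↑(Finset.Iic n)) fun i => {v i}) = ∏ i ∈ Finset.Iic n, bern {v i} :=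
  Measure.infinitePi_pi _ fun _ _ => measurableSet_singleton _

theorem MeasureTheory.Measure.ext_of_pi_Iic_singleton {X : Type*} [MeasurableSpace X]
    [MeasurableSingletonClass X] [Countable X] {μ ν : Measure (ℕ → X)}
    [IsFiniteMeasure μ] [IsFiniteMeasure ν]
    (h : ∀ (n : ℕ) (v : ℕ → X), μ (Set.pi (↑(Finset.Iic n)) fun i => {v i})
      = ν (Set.pi (↑(Finset.Iic n)) fun i => {v i})) : μ = ν := by
  have hμ : IsProjectiveLimit μ fun I => μ.map I.restrict := fun _ => rfl
  have hfam := isProjectiveMeasureFamily_map_restrict (X := fun i (e : ℕ → X) => e i) (P := μ)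
    fun i => (measurable_pi_apply i).aemeasurable
  refine hμ.unique <| (isProjectiveLimit_nat_iff hfam ν).2
    fun n => Measure.ext_iff_singleton.2 fun x => ?_
  have hx : Preorder.frestrictLe (π := fun _ => X) n ⁻¹' {x} = Set.pi (↑(Finset.Iic n)) fun i =>
      {if hi : i ≤ n then x ⟨i, Finset.mem_Iic.2 hi⟩ else x ⟨n, Finset.mem_Iic.2 le_rfl⟩} := by
    ext e
    simp +contextual [funext_iff]
  rw [Measure.map_apply (by fun_prop) (measurableSet_singleton x),
    Measure.map_apply (by fun_prop) (measurableSet_singleton x), hx, ← h]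
  exact congrArg μ hx.symm

def dyadicPath (e : ℕ → ℤ) (n : ℕ) : ℤ := ∑ j ∈ Finset.Icc 1 n, e (Nat.log 2 j)

@[simp]
lemma dyadicPath_zero (e : ℕ → ℤ) : dyadicPath e 0 = 0 := by simp [dyadicPath]

lemma dyadicPath_succ (e : ℕ → ℤ) (n : ℕ) :
    dyadicPath e (n + 1) = dyadicPath e n + e (Nat.log 2 (n + 1)) := by
  rw [dyadicPath, Finset.sum_Icc_succ_top (by omega)]
  rfl

lemma measurable_dyadicPath : Measurable dyadicPath := by
  unfold dyadicPath
  fun_prop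

lemma dyadicPath_neg (e : ℕ → ℤ) : dyadicPath (-e) = -dyadicPath e := by
  ext n
  simp [dyadicPath]

lemma dyadicPath_eq_add_mul {e : ℕ → ℤ} {m n : ℕ} {c : ℤ} (hmn : m ≤ n)
    (h : ∀ j, m < j → j ≤ n → e (Nat.log 2 j) = c) :
    dyadicPath e n = dyadicPath e m + (n - m) * c := by
  induction n, hmn using Nat.le_induction with
  | base => simp
  | succ n hmn ih =>
    rw [dyadicPath_succ, ih fun j hj hjn => h j hj (by omega), h (n + 1) (by omega) le_rfl]
    push_cast
    ring

lemma reflect_succ_sub (a : ℤ) (s : ℕ → ℤ) (k : ℕ) :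
    reflect a s (k + 1) - reflect a s k =
      if ∀ j ≤ k, s j ≠ a then s (k + 1) - s k else s k - s (k + 1) := by
  simp [reflect, Finset.sum_range_succ]

lemma reflect_self_zero (s : ℕ → ℤ) (n : ℕ) : reflect (s 0) s n = s 0 - s n := by
  rw [reflect, Finset.sum_congr rfl fun k _ => if_neg fun h => h 0 k.zero_le rfl,
    Finset.sum_range_sub']

lemma measurable_reflect (a : ℤ) : Measurable (reflect a) := by
  refine measurable_pi_lambda _ fun n => Finset.measurable_sum _ fun k _ => ?_
  refine Measurable.ite ?_ (by fun_prop) (by fun_prop)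
  measurability

def flipAfterOne (e : ℕ → ℤ) (j : ℕ) : ℤ := if ∃ i < j, e i = 1 then -e j else e j

lemma measurable_flipAfterOne : Measurable flipAfterOne := by
  refine measurable_pi_lambda _ fun j => Measurable.ite ?_ (by fun_prop) (by fun_prop)
  measurability

lemma flipAfterOne_congr {e e' : ℕ → ℤ} {j : ℕ} (h : ∀ i ≤ j, e i = e' i) :
    flipAfterOne e j = flipAfterOne e' j := by
  have hex : (∃ i < j, e i = 1) ↔ ∃ i < j, e' i = 1 :=
    exists_congr fun i => and_congr_right fun hi => by rw [h i hi.le]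
  simp only [flipAfterOne, hex, h j le_rfl]

lemma exists_flipAfterOne_eq_one_iff (e : ℕ → ℤ) (j : ℕ) :
    (∃ i < j, flipAfterOne e i = 1) ↔ ∃ i < j, e i = 1 := by
  constructor
  · rintro ⟨i, hij, hi⟩
    by_cases hprev : ∃ i' < i, e i' = 1
    · obtain ⟨i', hi', he⟩ := hprev
      exact ⟨i', hi'.trans hij, he⟩
    · exact ⟨i, hij, by rwa [flipAfterOne, if_neg hprev] at hi⟩
  · intro hj
    have hex : ∃ i, i < j ∧ e i = 1 := hj
    refine ⟨Nat.find hex, (Nat.find_spec hex).1, ?_⟩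
    rw [flipAfterOne,
      if_neg fun ⟨i, hi, he⟩ => Nat.find_min hex hi ⟨hi.trans (Nat.find_spec hex).1, he⟩]
    exact (Nat.find_spec hex).2

lemma flipAfterOne_flipAfterOne (e : ℕ → ℤ) : flipAfterOne (flipAfterOne e) = e := by
  funext j
  by_cases h : ∃ i < j, e i = 1
  · rw [flipAfterOne, if_pos ((exists_flipAfterOne_eq_one_iff e j).2 h), flipAfterOne, if_pos h,
      neg_neg]
  · rw [flipAfterOne, if_neg (mt (exists_flipAfterOne_eq_one_iff e j).1 h), flipAfterOne, if_neg h]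

lemma flipAfterOne_preimage_pi_Iic (n : ℕ) (v : ℕ → ℤ) :
    flipAfterOne ⁻¹' Set.pi (↑(Finset.Iic n)) (fun i => {v i})
      = Set.pi (↑(Finset.Iic n)) fun i => {flipAfterOne v i} := by
  ext e
  simp only [Set.mem_preimage, Set.mem_pi, Finset.coe_Iic, Set.mem_Iic, Set.mem_singleton_iff]
  constructor
  · intro h i hi
    rw [← flipAfterOne_flipAfterOne e]
    exact flipAfterOne_congr fun k hk => h k (hk.trans hi)
  · intro h i hi
    rw [← flipAfterOne_flipAfterOne v]
    exact flipAfterOne_congr fun k hk => h k (hk.trans hi)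

lemma map_flipAfterOne_bernoulliSeq : bernoulliSeq.map flipAfterOne = bernoulliSeq := by
  refine Measure.ext_of_pi_Iic_singleton fun n v => ?_
  rw [Measure.map_apply measurable_flipAfterOne
      (.pi (Finset.countable_toSet _) fun _ _ => measurableSet_singleton _),
    flipAfterOne_preimage_pi_Iic, bernoulliSeq_pi_Iic, bernoulliSeq_pi_Iic]
  refine Finset.prod_congr rfl fun i _ => ?_
  rw [flipAfterOne]
  split_ifs
  exacts [bern_singleton_neg _, rfl]

lemma map_neg_bernoulliSeq : bernoulliSeq.map Neg.neg = bernoulliSeq := by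
  calc bernoulliSeq.map Neg.neg = Measure.infinitePi fun _ => bern.map Neg.neg :=
        Measure.infinitePi_map_pi _ fun _ => measurable_neg
    _ = bernoulliSeq := by rw [map_neg_bern]

lemma dyadicPath_eq_neg_of_lt_two_pow {e : ℕ → ℤ} {K : ℕ} (hlt : ∀ i < K, e i = -1) {j : ℕ}
    (hj : j < 2 ^ K) : dyadicPath e j = -j := by
  rw [dyadicPath_eq_add_mul (m := 0) (c := -1) j.zero_le fun i hi hij =>
    hlt _ (Nat.log_lt_of_lt_pow (by omega) (by omega))]
  simp

lemma exists_dyadicPath_eq_one_iff {e : ℕ → ℤ} {K : ℕ} (hlt : ∀ i < K, e i = -1) (hK : e K = 1)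
    (k : ℕ) : (∃ j ≤ k, dyadicPath e j = 1) ↔ 2 ^ (K + 1) ≤ k + 1 := by
  have hpow : 2 ^ (K + 1) = 2 * 2 ^ K := by ring
  have hpos : 0 < 2 ^ K := by positivity
  have hstart : dyadicPath e (2 ^ K - 1) = -(2 ^ K - 1 : ℕ) :=
    dyadicPath_eq_neg_of_lt_two_pow hlt (by omega)
  have hblock : ∀ j, 2 ^ K - 1 ≤ j → j < 2 ^ (K + 1) →
      dyadicPath e j = j + 2 - (2 ^ (K + 1) : ℕ) := by
    intro j hj hjK
    rw [dyadicPath_eq_add_mul hj (c := 1) fun i hi hij => by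
      rw [Nat.log_eq_of_pow_le_of_lt_pow (m := K) (by omega) (by omega), hK], hstart]
    push_cast [Nat.one_le_two_pow]
    ring
  constructor
  · rintro ⟨j, hjk, hj⟩
    by_contra hk
    rcases lt_or_ge j (2 ^ K - 1) with hjK | hjK
    · rw [dyadicPath_eq_neg_of_lt_two_pow hlt (by omega)] at hj
      omega
    · rw [hblock j hjK (by omega)] at hj
      omega
  · intro hk
    refine ⟨2 ^ (K + 1) - 1, by omega, ?_⟩
    rw [hblock _ (by omega) (by omega)]
    push_cast [Nat.one_le_two_pow]
    ring

lemma forall_dyadicPath_ne_one_iff {e : ℕ → ℤ} (he : ∀ i, e i = 1 ∨ e i = -1) (k : ℕ) :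
    (∀ j ≤ k, dyadicPath e j ≠ 1) ↔ ∀ i < Nat.log 2 (k + 1), e i ≠ 1 := by
  by_cases hex : ∃ i, e i = 1
  · have hlt : ∀ i < Nat.find hex, e i = -1 := fun i hi => (he i).resolve_left (Nat.find_min hex hi)
    calc (∀ j ≤ k, dyadicPath e j ≠ 1) ↔ ¬ 2 ^ (Nat.find hex + 1) ≤ k + 1 := by
          rw [← exists_dyadicPath_eq_one_iff hlt (Nat.find_spec hex) k]
          simp
      _ ↔ ¬ Nat.find hex < Nat.log 2 (k + 1) := by
          rw [Nat.lt_iff_add_one_le, Nat.le_log_iff_pow_le one_lt_two (by omega)]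
      _ ↔ ∀ i < Nat.log 2 (k + 1), e i ≠ 1 := by
          simp
  · push Not at hex
    have hneg : ∀ i, e i = -1 := fun i => (he i).resolve_left (hex i)
    refine iff_of_true (fun j _ => ?_) fun i _ => hex i
    rw [dyadicPath_eq_neg_of_lt_two_pow (fun i _ => hneg i) j.lt_two_pow_self]
    omega

lemma reflect_one_dyadicPath {e : ℕ → ℤ} (he : ∀ i, e i = 1 ∨ e i = -1) :
    reflect 1 (dyadicPath e) = dyadicPath (flipAfterOne e) := by
  funext n
  induction n with
  | zero => simp [reflect]
  | succ k ih =>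
    have hstep : reflect 1 (dyadicPath e) (k + 1) - reflect 1 (dyadicPath e) k
        = flipAfterOne e (Nat.log 2 (k + 1)) := by
      simp only [reflect_succ_sub, forall_dyadicPath_ne_one_iff he, dyadicPath_succ, flipAfterOne]
      by_cases h : ∃ i < Nat.log 2 (k + 1), e i = 1 <;> simp [h]
    rw [dyadicPath_succ, ← ih, ← hstep]
    ring

def dyadicKinks : Set (ℕ → ℤ) :=
  {s | ∃ n, Nat.log 2 (n + 1) = Nat.log 2 (n + 2) ∧ s (n + 2) - s (n + 1) ≠ s (n + 1) - s n}

lemma measurableSet_dyadicKinks : MeasurableSet dyadicKinks := by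
  unfold dyadicKinks
  measurability

lemma dyadicPath_notMem_dyadicKinks (e : ℕ → ℤ) : dyadicPath e ∉ dyadicKinks := by
  rintro ⟨n, hlog, hne⟩
  rw [dyadicPath_succ e (n + 1), dyadicPath_succ e n, ← hlog] at hne
  exact hne (by ring)

lemma reflect_mem_dyadicKinks {a : ℤ} {s : ℕ → ℤ} {n : ℕ} (hfree : ∀ j ≤ n, s j ≠ a)
    (hhit : s (n + 1) = a) (hlog : Nat.log 2 (n + 1) = Nat.log 2 (n + 2))
    (hinc : s (n + 2) - s (n + 1) = s (n + 1) - s n) (hne : s (n + 1) - s n ≠ 0) :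
    reflect a s ∈ dyadicKinks := by
  refine ⟨n, hlog, ?_⟩
  rw [show n + 2 = n + 1 + 1 from rfl] at hinc ⊢
  rw [reflect_succ_sub a s (n + 1), reflect_succ_sub, if_pos hfree,
    if_neg fun h => h (n + 1) le_rfl hhit]
  omega

lemma reflect_dyadicPath_mem_dyadicKinks {a : ℕ} (ha : 2 ≤ a) {c : ℤ} (hc : c = 1 ∨ c = -1)
    {T : ℕ} (hT : (T : ℤ) = a + 1 - c) (hlog : Nat.log 2 T = Nat.log 2 (T + 1)) {e : ℕ → ℤ}
    (he0 : e 0 = c) (he : ∀ i, 1 ≤ i → i ≤ Nat.log 2 (T + 1) → e i = 1) :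
    reflect a (dyadicPath e) ∈ dyadicKinks := by
  have hF : ∀ n, 1 ≤ n → n ≤ T + 1 → dyadicPath e n = n - 1 + c := by
    intro n h1 hn
    rw [dyadicPath_eq_add_mul h1 (c := 1) fun j hj hjn =>
      he _ (Nat.le_log_of_pow_le one_lt_two (by omega)) (Nat.log_mono_right (by omega))]
    simp [dyadicPath_succ, he0]
    ring
  obtain ⟨n, rfl⟩ : ∃ n, T = n + 1 := ⟨T - 1, by omega⟩
  have hn : 1 ≤ n := by omega
  apply reflect_mem_dyadicKinks (n := n)
  · intro j hj
    rcases j.eq_zero_or_pos with rfl | hj0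
    · simp
      omega
    · rw [hF j hj0 (by omega)]
      omega
  · rw [hF (n + 1) (by omega) (by omega)]
    omega
  · exact hlog
  · rw [hF (n + 2) (by omega) le_rfl, hF (n + 1) (by omega) (by omega), hF n hn (by omega)]
    omega
  · rw [hF (n + 1) (by omega) (by omega), hF n hn (by omega)]
    omega

lemma exists_sign_log_eq_log_succ {a : ℕ} (ha : 2 ≤ a) :
    ∃ c : ℤ, (c = 1 ∨ c = -1) ∧ ∃ T : ℕ, (T : ℤ) = a + 1 - c ∧ Nat.log 2 T = Nat.log 2 (T + 1) := by
  by_cases hpow : ∃ m, a + 1 = 2 ^ m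
  · obtain ⟨m, hm⟩ := hpow
    have hm2 : 2 ≤ m := by
      by_contra! h
      interval_cases m <;> omega
    have h4 : 4 ≤ 2 ^ m := by
      calc 4 = 2 ^ 2 := by norm_num
        _ ≤ 2 ^ m := Nat.pow_le_pow_right two_pos hm2
    have hlog : ∀ t, 2 ^ m ≤ t → t < 2 ^ (m + 1) → Nat.log 2 t = m := fun t h1 h2 =>
      Nat.log_eq_of_pow_le_of_lt_pow h1 h2
    refine ⟨-1, Or.inr rfl, a + 2, by push_cast; ring, ?_⟩
    rw [hlog _ (by omega) (by rw [pow_succ]; omega), hlog _ (by omega) (by rw [pow_succ]; omega)]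
  · refine ⟨1, Or.inl rfl, a, by ring, ?_⟩
    exact (Nat.log_eq_log_succ_iff one_lt_two (by omega)).2 fun h => hpow ⟨_, h.symm⟩

lemma bern_singleton_ne_zero {x : ℤ} (hx : x = 1 ∨ x = -1) : bern {x} ≠ 0 := by
  obtain rfl | rfl := hx
  · simp [bern]
  · rw [bern_singleton_neg]
    simp [bern]

lemma map_reflect_dyadicPath_ne {a : ℕ} (ha : 2 ≤ a) :
    bernoulliSeq.map (reflect a ∘ dyadicPath) ≠ bernoulliSeq.map dyadicPath := by
  obtain ⟨c, hc, T, hT, hlog⟩ := exists_sign_log_eq_log_succ ha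
  set v : ℕ → ℤ := fun i => if i = 0 then c else 1
  have hcyl : Set.pi (↑(Finset.Iic (Nat.log 2 (T + 1)))) (fun i => {v i})
      ⊆ (reflect a ∘ dyadicPath) ⁻¹' dyadicKinks := by
    intro e he
    simp only [Set.mem_pi, Finset.coe_Iic, Set.mem_Iic, Set.mem_singleton_iff] at he
    exact reflect_dyadicPath_mem_dyadicKinks ha hc hT hlog (by simpa [v] using he 0 (by omega))
      fun i h1 h2 => by simpa [v, show i ≠ 0 by omega] using he i h2
  have hpos : bernoulliSeq (Set.pi (↑(Finset.Iic (Nat.log 2 (T + 1)))) fun i => {v i}) ≠ 0 := by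
    rw [bernoulliSeq_pi_Iic]
    refine Finset.prod_ne_zero_iff.2 fun i _ => bern_singleton_ne_zero ?_
    by_cases hi : i = 0 <;> simp [v, hi, hc]
  intro h
  refine hpos (measure_mono_null hcyl ?_)
  have hempty : dyadicPath ⁻¹' dyadicKinks = ∅ :=
    Set.eq_empty_of_forall_notMem dyadicPath_notMem_dyadicKinks
  rw [← Measure.map_apply ((measurable_reflect a).comp measurable_dyadicPath)
    measurableSet_dyadicKinks, h, Measure.map_apply measurable_dyadicPath measurableSet_dyadicKinks,
    hempty, measure_empty]

lemma map_reflect_zero_dyadicPath :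
    bernoulliSeq.map (reflect 0 ∘ dyadicPath) = bernoulliSeq.map dyadicPath := by
  have h : reflect 0 ∘ dyadicPath = dyadicPath ∘ Neg.neg := by
    funext e n
    simpa [dyadicPath_neg] using reflect_self_zero (dyadicPath e) n
  rw [h, ← Measure.map_map measurable_dyadicPath measurable_neg, map_neg_bernoulliSeq]

lemma map_reflect_one_dyadicPath :
    bernoulliSeq.map (reflect 1 ∘ dyadicPath) = bernoulliSeq.map dyadicPath := by
  have h : reflect 1 ∘ dyadicPath =ᵐ[bernoulliSeq] dyadicPath ∘ flipAfterOne := by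
    filter_upwards [ae_bernoulliSeq] with e he using reflect_one_dyadicPath he
  rw [Measure.map_congr h, ← Measure.map_map measurable_dyadicPath measurable_flipAfterOne,
    map_flipAfterOne_bernoulliSeq]

lemma map_reflect_dyadicPath_eq_iff (a : ℕ) :
    bernoulliSeq.map (reflect a ∘ dyadicPath) = bernoulliSeq.map dyadicPath ↔ a = 0 ∨ a = 1 := by
  refine ⟨fun h => ?_, ?_⟩
  · by_contra! ha
    exact map_reflect_dyadicPath_ne (by omega) h
  · rintro (rfl | rfl)
    exacts [map_reflect_zero_dyadicPath, map_reflect_one_dyadicPath]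

theorem counterexample_two_only_levels_general
    {Ω : Type*} [MeasurableSpace Ω] (P : Measure Ω)
    (ε : ℕ → Ω → ℤ) (hmeas : ∀ k, Measurable (ε k))
    (hindep : iIndepFun ε P)
    (hlaw : ∀ k, Measure.map (ε k) P = bern)
    (M : ℕ → Ω → ℤ)
    (hM : ∀ ω n, M n ω = ∑ j ∈ Finset.Icc 1 n, ε (Nat.log 2 j) ω) :
    ∀ a : ℕ,
      (Measure.map (fun ω => reflect (a : ℤ) (fun n => M n ω)) P
          = Measure.map (fun ω => (fun n => M n ω)) P)
        ↔ (a = 0 ∨ a = 1) := by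
  intro a
  have hseq : P.map (fun ω i => ε i ω) = bernoulliSeq := by
    simp only [hindep.map_fun_eq_infinitePi_map hmeas, hlaw]
  have hpath : (fun ω n => M n ω) = dyadicPath ∘ fun ω i => ε i ω := by
    funext ω n
    exact hM ω n
  have hmap : ∀ Φ : (ℕ → ℤ) → ℕ → ℤ, Measurable Φ →
      P.map (Φ ∘ fun ω n => M n ω) = bernoulliSeq.map (Φ ∘ dyadicPath) := fun Φ hΦ => by
    rw [hpath, ← hseq,
      Measure.map_map (hΦ.comp measurable_dyadicPath) (measurable_pi_lambda _ hmeas)]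
    rfl
  have hrefl : P.map (fun ω => reflect a fun n => M n ω)
      = bernoulliSeq.map (reflect a ∘ dyadicPath) := hmap _ (measurable_reflect a)
  have hid : P.map (fun ω n => M n ω) = bernoulliSeq.map dyadicPath := hmap id measurable_id
  rw [hrefl, hid]
  exact map_reflect_dyadicPath_eq_iff a

/-- **Counterexample 2, sharpness.** For the skip free process
`M_n = ∑_{j=1}^n ε_{⌊log₂ j⌋}` built from i.i.d. symmetric Bernoulli random variables
`(ε_k)_{k ≥ 0}`, the levels `0` and `1` are the only nonnegative integer levels at which
the reflection principle holds: for `a ∈ ℕ`, `Θ^a(M) ≐ M` if and only if `a = 0` or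
`a = 1`. -/
theorem counterexample_two_only_levels
    {Ω : Type*} [MeasurableSpace Ω] (P : Measure Ω) [IsProbabilityMeasure P]
    (ε : ℕ → Ω → ℤ) (hmeas : ∀ k, Measurable (ε k))
    (hindep : iIndepFun ε P)
    (hlaw : ∀ k, Measure.map (ε k) P = bern)
    (M : ℕ → Ω → ℤ)
    (hM : ∀ ω n, M n ω = ∑ j ∈ Finset.Icc 1 n, ε (Nat.log 2 j) ω) :
    ∀ a : ℕ,
      (Measure.map (fun ω => reflect (a : ℤ) (fun n => M n ω)) P
          = Measure.map (fun ω => (fun n => M n ω)) P)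
        ↔ (a = 0 ∨ a = 1) :=
  counterexample_two_only_levels_general P ε hmeas hindep hlaw M hM
end
end

section
/- Let k ≥ 1 and λ_1, …, λ_k ∈ ℝ. For a > 0 small enough that cos(λ_j a) > 0 for all j, and for x = (x_1, …, x_k) with 0 = x_0 ≤ x_1 ≤ … ≤ x_k, define F_a(x) = ∏_{j=1}^k [cos(λ_j a)]^{(⌊a^{−2} x_j⌋ − ⌊a^{−2} x_{j−1}⌋)}. Then, as a → 0+, F_a(x) converges to exp(−(1/2) Σ_{j=1}^k λ_j² (x_j − x_{j−1})), and the convergence is uniform for x in compact subsets of {(x_1,…,x_k) ∈ ℝ_+^k : 0 ≤ x_1 ≤ … ≤ x_k}. -/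
/-!
Taking logarithms, the product becomes `∑ⱼ a² (⌊x_{j+1}/a²⌋ - ⌊x_j/a²⌋) · log cos(λ_j a) / a²`.
The first factor converges to `x_{j+1} - x_j` uniformly in `x`, since `t ⌊u/t⌋` lies within `t`
of `u`; the second tends to `-λ_j²/2`, because `log y = (y - 1) · dslope log 1 y` and
`1 - cos u = (u²/2) sinc(u/2)²` with both `dslope log 1` and `sinc` continuous. On the compact
set `K` the limits stay bounded, and a continuous map (multiplication, `exp`) is uniformly
continuous on a compact neighbourhood of a bounded set, so uniform convergence passes through it.
-/

open Filter Finset Real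
open scoped Topology

theorem one_sub_cos_eq_mul_sinc_sq (x : ℝ) : 1 - cos x = x ^ 2 / 2 * sinc (x / 2) ^ 2 := by
  rcases eq_or_ne x 0 with rfl | hx
  · simp
  have h := cos_two_mul_eq_one_sub (x / 2)
  rw [mul_div_cancel₀ x two_ne_zero] at h
  rw [h, sinc_of_ne_zero (div_ne_zero hx two_ne_zero)]
  field_simp
  ring

theorem tendsto_log_cos_mul_div_sq (c : ℝ) :
    Tendsto (fun a => log (cos (c * a)) / a ^ 2) (𝓝[≠] 0) (𝓝 (-(c ^ 2 / 2))) := by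
  have hdslope : ContinuousAt (dslope log 1) (cos (c * 0)) := by
    rw [mul_zero, cos_zero]
    exact continuousAt_dslope_same.2 (differentiableAt_log one_ne_zero)
  have hcont : ContinuousAt
      (fun a => -(c ^ 2 / 2 * sinc (c * a / 2) ^ 2) * dslope log 1 (cos (c * a))) 0 :=
    ContinuousAt.mul (by fun_prop) (hdslope.comp (x := 0) (f := fun a => cos (c * a)) (by fun_prop))
  have hval : -(c ^ 2 / 2 * sinc (c * 0 / 2) ^ 2) * dslope log 1 (cos (c * 0)) = -(c ^ 2 / 2) := by
    simp [dslope_same]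
  rw [← hval]
  refine (hcont.tendsto.mono_left nhdsWithin_le_nhds).congr' ?_
  filter_upwards [self_mem_nhdsWithin] with a (ha : a ≠ 0)
  have hlog := sub_smul_dslope log 1 (cos (c * a))
  rw [log_one, sub_zero, smul_eq_mul, ← neg_sub, one_sub_cos_eq_mul_sinc_sq] at hlog
  rw [← hlog]
  field_simp

theorem tendstoUniformly_mul_floor_div {ι : Type*} {l : Filter ι} {t : ι → ℝ}
    (ht : Tendsto t l (𝓝[>] 0)) :
    TendstoUniformly (fun i (u : ℝ) => t i * ⌊u / t i⌋) (fun u => u) l := by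
  rw [Metric.tendstoUniformly_iff]
  intro ε hε
  filter_upwards [ht (Ioo_mem_nhdsGT hε)] with i ⟨hpos, hlt⟩ u
  rw [dist_eq, abs_of_nonneg (by linarith [Int.sub_floor_div_mul_nonneg u hpos])]
  linarith [Int.sub_floor_div_mul_lt u hpos]

theorem Continuous.comp_tendstoUniformlyOn_of_isBounded {ι α β γ : Type*} [PseudoMetricSpace β]
    [ProperSpace β] [UniformSpace γ] {F : ι → α → β} {f : α → β} {p : Filter ι} {K : Set α}
    {g : β → γ} (hg : Continuous g) (hf : Bornology.IsBounded (f '' K))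
    (h : TendstoUniformlyOn F f p K) :
    TendstoUniformlyOn (fun i x => g (F i x)) (fun x => g (f x)) p K := by
  have hcompact : IsCompact (Metric.cthickening 1 (f '' K)) :=
    Metric.isCompact_of_isClosed_isBounded Metric.isClosed_cthickening hf.cthickening
  have hnear : ∀ᶠ i in p, ∀ x ∈ K, F i x ∈ Metric.cthickening 1 (f '' K) := by
    filter_upwards [Metric.tendstoUniformlyOn_iff.1 h 1 one_pos] with i hi x hx
    exact Metric.mem_cthickening_of_dist_le _ (f x) _ _ ⟨x, hx, rfl⟩
      (by rw [dist_comm]; exact (hi x hx).le)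
  exact (hcompact.uniformContinuousOn_of_continuous hg.continuousOn)
    |>.comp_tendstoUniformlyOn_eventually hnear
      (fun x hx => Metric.self_subset_cthickening _ ⟨x, hx, rfl⟩) h

theorem TendstoUniformlyOn.pair {ι α β γ : Type*} [UniformSpace β] [UniformSpace γ]
    {F : ι → α → β} {f : α → β} {G : ι → α → γ} {g : α → γ} {p : Filter ι} {K : Set α}
    (hF : TendstoUniformlyOn F f p K) (hG : TendstoUniformlyOn G g p K) :
    TendstoUniformlyOn (fun i x => (F i x, G i x)) (fun x => (f x, g x)) p K :=
  fun u hu => (hF.prodMk hG u hu).diag_of_prod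

theorem tendstoUniformlyOn_finset_sum {ι κ α β : Type*} [UniformSpace β] [AddCommGroup β]
    [IsUniformAddGroup β] {F : κ → ι → α → β} {f : κ → α → β} {p : Filter ι} {K : Set α}
    (s : Finset κ) (h : ∀ j ∈ s, TendstoUniformlyOn (F j) (f j) p K) :
    TendstoUniformlyOn (fun i x => ∑ j ∈ s, F j i x) (fun x => ∑ j ∈ s, f j x) p K := by
  classical
  induction s using Finset.induction_on with
  | empty => simpa using tendsto_const_nhds.tendstoUniformlyOn_const (b := (0 : β)) K
  | insert j s hj ih =>
    simp only [sum_insert hj]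
    exact (h j (mem_insert_self j s)).fun_add (ih fun i hi => h i (mem_insert_of_mem hi))

theorem TendstoUniformlyOn.mul_tendsto {ι α R : Type*} [NormedRing R] [ProperSpace R]
    {F : ι → α → R} {f : α → R} {g : ι → R} {c : R} {p : Filter ι} {K : Set α}
    (hF : TendstoUniformlyOn F f p K) (hf : Bornology.IsBounded (f '' K))
    (hg : Tendsto g p (𝓝 c)) :
    TendstoUniformlyOn (fun i x => F i x * g i) (fun x => f x * c) p K := by
  have hbdd : Bornology.IsBounded ((fun x => (f x, c)) '' K) :=
    (hf.prod Bornology.isBounded_singleton).subset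
      (by rintro _ ⟨x, hx, rfl⟩; exact ⟨⟨x, hx, rfl⟩, rfl⟩)
  exact continuous_mul.comp_tendstoUniformlyOn_of_isBounded hbdd
    (hF.pair (hg.tendstoUniformlyOn_const K))

theorem tendstoUniformly_sq_mul_floor_div_sq :
    TendstoUniformly (fun (a u : ℝ) => a ^ 2 * ⌊u / a ^ 2⌋) (fun u => u) (𝓝[>] 0) := by
  refine tendstoUniformly_mul_floor_div (tendsto_nhdsWithin_iff.2
    ⟨?_, eventually_nhdsWithin_of_forall fun a (ha : 0 < a) => show 0 < a ^ 2 from pow_pos ha 2⟩)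
  simpa using ((continuous_pow 2).tendsto (0 : ℝ)).mono_left nhdsWithin_le_nhds

theorem tendstoUniformlyOn_floor_sub_floor_mul_log_cos {α : Type*} {K : Set α} {p q : α → ℝ}
    (hbdd : Bornology.IsBounded ((fun x => q x - p x) '' K)) (c : ℝ) :
    TendstoUniformlyOn
      (fun a x => ((⌊q x / a ^ 2⌋ - ⌊p x / a ^ 2⌋ : ℤ) : ℝ) * log (cos (c * a)))
      (fun x => (q x - p x) * -(c ^ 2 / 2)) (𝓝[>] 0) K := by
  have hdiff := ((tendstoUniformly_sq_mul_floor_div_sq.comp q).fun_sub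
    (tendstoUniformly_sq_mul_floor_div_sq.comp p)).tendstoUniformlyOn (s := K)
  have hratio := (tendsto_log_cos_mul_div_sq c).mono_left
    (nhdsWithin_mono _ fun a (ha : 0 < a) => ha.ne')
  refine (hdiff.mul_tendsto hbdd hratio).congr ?_
  filter_upwards [self_mem_nhdsWithin] with a (ha : 0 < a) x _
  simp only [Function.comp_apply]
  push_cast
  field_simp

theorem cos_pow_floor_tendstoUniformlyOn_general
    (k : ℕ) (lam : ℕ → ℝ)
    (K : Set (ℕ → ℝ)) (hK : IsCompact K) :
    TendstoUniformlyOn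
      (fun (a : ℝ) (x : ℕ → ℝ) =>
        ∏ j ∈ Finset.range k,
          Real.cos (lam (j + 1) * a) ^ (⌊x (j + 1) / a ^ 2⌋ - ⌊x j / a ^ 2⌋))
      (fun x =>
        Real.exp (-(1 / 2) * ∑ j ∈ Finset.range k, lam (j + 1) ^ 2 * (x (j + 1) - x j)))
      (𝓝[>] (0 : ℝ)) K := by
  have hsum := tendstoUniformlyOn_finset_sum (range k) fun j _ =>
    tendstoUniformlyOn_floor_sub_floor_mul_log_cos (p := fun x => x j) (q := fun x => x (j + 1))
      (hK.image (by fun_prop)).isBounded (lam (j + 1))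
  have hcos : ∀ᶠ a in 𝓝[>] (0 : ℝ), ∀ j ∈ range k, 0 < cos (lam (j + 1) * a) := by
    refine (eventually_all_finset _).2 fun j _ => ?_
    have hlim : Tendsto (fun a => cos (lam (j + 1) * a)) (𝓝 0) (𝓝 1) :=
      Continuous.tendsto' (by fun_prop) 0 1 (by simp)
    exact (hlim.mono_left nhdsWithin_le_nhds).eventually (lt_mem_nhds one_pos)
  refine ((continuous_exp.comp_tendstoUniformlyOn_of_isBounded
    (hK.image (by fun_prop)).isBounded hsum).congr ?_).congr_right ?_
  · filter_upwards [hcos] with a ha x _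
    simp only [exp_sum]
    refine prod_congr rfl fun j hj => ?_
    rw [← log_zpow, exp_log (zpow_pos (ha j hj) _)]
  · intro x _
    dsimp only
    rw [mul_sum]
    exact congrArg exp (sum_congr rfl fun j _ => by ring)

/-- **Key limit computation in the proof of Theorem 1** (equations (16)–(17)). For
`0 = x_0 ≤ x_1 ≤ … ≤ x_k`, the products
`F_a(x) = ∏_{j=1}^k cos(λ_j a)^{⌊a⁻² x_j⌋ - ⌊a⁻² x_{j-1}⌋}` converge, as `a → 0+`, to
`exp(-(1/2) ∑_{j=1}^k λ_j² (x_j - x_{j-1}))`, uniformly on compact sets. -/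
theorem cos_pow_floor_tendstoUniformlyOn
    (k : ℕ) (hk : 1 ≤ k) (lam : ℕ → ℝ)
    (K : Set (ℕ → ℝ)) (hK : IsCompact K)
    (hKsub : K ⊆ {x : ℕ → ℝ | x 0 = 0 ∧ ∀ j < k, 0 ≤ x j ∧ x j ≤ x (j + 1)}) :
    TendstoUniformlyOn
      (fun (a : ℝ) (x : ℕ → ℝ) =>
        ∏ j ∈ Finset.range k,
          Real.cos (lam (j + 1) * a) ^ (⌊x (j + 1) / a ^ 2⌋ - ⌊x j / a ^ 2⌋))
      (fun x =>
        Real.exp (-(1 / 2) * ∑ j ∈ Finset.range k, lam (j + 1) ^ 2 * (x (j + 1) - x j)))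
      (𝓝[>] (0 : ℝ)) K :=
  cos_pow_floor_tendstoUniformlyOn_general k lam K hK
end
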